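/- arXiv:1109.0099 — 3 statements merged into one kernel-verified Lean document; each statement's English description precedes it below -/
import Mathlib

section
/- Let ρ be a critical radius function on ℝ^n with constants C_0, l_0, let θ ≥ 0, 0 < η < ∞, let f ∈ L^1(ℝ^n), λ > 0, and set Ω_λ = { x ∈ ℝ^n : M^Δ_{V,η} f(x) > λ }. Then Ω_λ can be written as a disjoint union of dyadic cubes {Q_j} such that: (i) λ < (Ψ(Q_j)^η |Q_j|)^{-1} ∫_{Q_j} |f(x)| dx for each j; (ii) for each cube Q_j = Q(x_j, r_j) whose sidelength satisfies r_j < ρ(x_j), one has |Q_j|^{-1} ∫_{Q_j} |f(x)| dx ≤ 2^n (8 n C_0)^{(l_0+2)θη} λ; (iii) |f(x)| ≤ λ for a.e. x ∈ ℝ^n \ ∪_j Q_j; (iv) |Ω_λ| ≤ λ^{-1} ∫_{ℝ^n} |f(x)| dx. -/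
open MeasureTheory Metric Set
open scoped ENNReal

noncomputable section

/-- Euclidean space `ℝ^n`. -/
abbrev Euc (n : ℕ) := EuclideanSpace ℝ (Fin n)

namespace Schrodinger

variable {n : ℕ}

/-- The axis-parallel closed cube with center `x₀` and sidelength `r`. -/
def cube (x₀ : Euc n) (r : ℝ) : Set (Euc n) := {y : Euc n | ∀ i, |y i - x₀ i| ≤ r / 2}

/-- `Ψ_θ(B)` for a ball (or cube) with center `x₀` and radius (or sidelength) `r`,
i.e. `(1 + r/ρ(x₀))^θ`. -/
def psi (ρ : Euc n → ℝ) (θ : ℝ) (x₀ : Euc n) (r : ℝ) : ℝ := (1 + r / ρ x₀) ^ θ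

/-- `ρ` is a critical radius function with constants `C₀ > 1` and `l₀ > 0`. -/
def IsCriticalRadius (ρ : Euc n → ℝ) (C₀ l₀ : ℝ) : Prop :=
  1 < C₀ ∧ 0 < l₀ ∧ (∀ x, 0 < ρ x) ∧ ∀ x y : Euc n,
    C₀⁻¹ * ρ x * (1 + dist x y / ρ x) ^ (-l₀) ≤ ρ y ∧
      ρ y ≤ C₀ * ρ x * (1 + dist x y / ρ x) ^ (l₀ / (l₀ + 1))

/-- A weight: a positive locally integrable function. -/
def IsWeight (w : Euc n → ℝ) : Prop :=
  (∀ x, 0 < w x) ∧ LocallyIntegrable w volume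

/-- The class `A_1^{ρ,θ}`. -/
def MemA1 (ρ : Euc n → ℝ) (θ : ℝ) (w : Euc n → ℝ) : Prop :=
  ∃ C : ℝ, ∀ᵐ x : Euc n, ∀ (x₀ : Euc n) (r : ℝ), 0 < r → x ∈ Metric.ball x₀ r →
    (psi ρ θ x₀ r * (volume (Metric.ball x₀ r)).toReal)⁻¹ *
      (∫ y in Metric.ball x₀ r, w y) ≤ C * w x

/-- The class `A_p^{ρ,θ}` for `p > 1`. -/
def MemApGt1 (ρ : Euc n → ℝ) (θ p : ℝ) (w : Euc n → ℝ) : Prop :=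
  ∃ C : ℝ, ∀ (x₀ : Euc n) (r : ℝ), 0 < r →
    ((psi ρ θ x₀ r * (volume (Metric.ball x₀ r)).toReal)⁻¹ *
        ∫ y in Metric.ball x₀ r, w y) *
      ((psi ρ θ x₀ r * (volume (Metric.ball x₀ r)).toReal)⁻¹ *
          ∫ y in Metric.ball x₀ r, w y ^ (-(1 / (p - 1)))) ^ (p - 1) ≤ C

/-- The class `A_p^{ρ,θ}` for `p ≥ 1`. -/
def MemAp (ρ : Euc n → ℝ) (θ p : ℝ) (w : Euc n → ℝ) : Prop :=
  if p = 1 then MemA1 ρ θ w else MemApGt1 ρ θ p w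

/-- The class `A_∞^{ρ,θ} = ∪_{p ≥ 1} A_p^{ρ,θ}`. -/
def MemAInfty (ρ : Euc n → ℝ) (θ : ℝ) (w : Euc n → ℝ) : Prop :=
  ∃ p : ℝ, 1 ≤ p ∧ MemAp ρ θ p w

/-- The class `A_{(p,q)}^{ρ,θ}`. -/
def MemApq (ρ : Euc n → ℝ) (θ p q : ℝ) (w : Euc n → ℝ) : Prop :=
  if p = 1 then
    ∃ C : ℝ, ∀ (x₀ : Euc n) (r : ℝ), 0 < r →
      ((psi ρ θ x₀ r * r ^ n)⁻¹ * ∫ y in cube x₀ r, w y ^ q) ^ (1 / q) *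
        essSup (fun y => (w y)⁻¹) (volume.restrict (cube x₀ r)) ≤ C
  else
    ∃ C : ℝ, ∀ (x₀ : Euc n) (r : ℝ), 0 < r →
      ((psi ρ θ x₀ r * r ^ n)⁻¹ * ∫ y in cube x₀ r, w y ^ q) ^ (1 / q) *
        ((psi ρ θ x₀ r * r ^ n)⁻¹ *
            ∫ y in cube x₀ r, w y ^ (-(p / (p - 1)))) ^ ((p - 1) / p) ≤ C

/-- The measure `ω(E) = ∫_E ω` as a lower integral. -/
def wSet (w : Euc n → ℝ) (E : Set (Euc n)) : ℝ≥0∞ := ∫⁻ x in E, ENNReal.ofReal (w x)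

/-- The maximal operator
`M_{β,V,η} g(x) = sup_{Q ∋ x} Ψ(Q)^{-η} (Ψ(Q)|Q|)^{β/n-1} ∫_Q g`,
the supremum being over all cubes containing `x`.  Taking `β = 0`, `η = 0` gives `M_V`;
taking `η = 0` gives `M_{β,V}`. -/
def eMaxB (ρ : Euc n → ℝ) (θ β η : ℝ) (g : Euc n → ℝ≥0∞) (x : Euc n) : ℝ≥0∞ :=
  ⨆ (x₀ : Euc n) (r : ℝ) (_ : 0 < r ∧ x ∈ cube x₀ r),
    ENNReal.ofReal (psi ρ θ x₀ r ^ (-η) * (psi ρ θ x₀ r * r ^ n) ^ (β / (n : ℝ) - 1)) *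
      ∫⁻ y in cube x₀ r, g y

/-- `|f|` as an `ℝ≥0∞`-valued function. -/
def ofl (f : Euc n → ℝ) : Euc n → ℝ≥0∞ := fun y => ENNReal.ofReal |f y|

/-- The dyadic cube `2^{-k}(m + [0,1)^n)`. -/
def dyadicCube (k : ℤ) (m : Fin n → ℤ) : Set (Euc n) :=
  {y : Euc n | ∀ i, (m i : ℝ) * 2 ^ (-k) ≤ y i ∧ y i < ((m i : ℝ) + 1) * 2 ^ (-k)}

/-- The center of the dyadic cube `2^{-k}(m + [0,1)^n)`. -/
def dyadicCenter (k : ℤ) (m : Fin n → ℤ) : Euc n :=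
  (EuclideanSpace.equiv (Fin n) ℝ).symm fun i => ((m i : ℝ) + 1 / 2) * 2 ^ (-k)

/-- The sidelength of a dyadic cube of generation `k`. -/
def dSide (k : ℤ) : ℝ := 2 ^ (-k)

/-- The dyadic maximal operator `M^Δ_{V,η}`. -/
def eMD (ρ : Euc n → ℝ) (θ η : ℝ) (g : Euc n → ℝ≥0∞) (x : Euc n) : ℝ≥0∞ :=
  ⨆ (k : ℤ) (m : Fin n → ℤ) (_ : x ∈ dyadicCube k m),
    (ENNReal.ofReal (psi ρ θ (dyadicCenter k m) (dSide k) ^ η * dSide k ^ n))⁻¹ *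
      ∫⁻ y in dyadicCube k m, g y

/-- The dyadic sharp maximal operator `M^♯_{V,η}`. -/
def eMSharp (ρ : Euc n → ℝ) (θ η : ℝ) (g : Euc n → ℝ) (x : Euc n) : ℝ≥0∞ :=
  (⨆ (k : ℤ) (m : Fin n → ℤ)
      (_ : x ∈ dyadicCube k m ∧ dSide k < ρ (dyadicCenter k m)),
      (ENNReal.ofReal (dSide k ^ n))⁻¹ *
        ∫⁻ y in dyadicCube k m,
          ENNReal.ofReal |g y - (dSide k ^ n)⁻¹ * ∫ z in dyadicCube k m, g z|) +
  ⨆ (k : ℤ) (m : Fin n → ℤ)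
      (_ : x ∈ dyadicCube k m ∧ ρ (dyadicCenter k m) ≤ dSide k),
      (ENNReal.ofReal (psi ρ θ (dyadicCenter k m) (dSide k) ^ η * dSide k ^ n))⁻¹ *
        ∫⁻ y in dyadicCube k m, ENNReal.ofReal |g y|

/-- The Young function `B(t) = t log(e + t)`. -/
def youngB (t : ℝ) : ℝ := t * Real.log (Real.exp 1 + t)

/-- The Luxemburg norm `‖f‖_{B,Q}` for `B(t) = t log(e+t)`. -/
def eluxB (Q : Set (Euc n)) (f : Euc n → ℝ) : ℝ≥0∞ :=
  sInf {l : ℝ≥0∞ | 0 < l ∧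
    ∫⁻ y in Q, ENNReal.ofReal (youngB (|f y| / l.toReal)) ≤ volume Q}

/-- The Orlicz maximal operator
`M_{LlogL,β,V,η} f(x) = sup_{Q ∋ x} Ψ(Q)^{-η} (Ψ(Q)|Q|)^{β/n} ‖f‖_{B,Q}`. -/
def MLlogL (ρ : Euc n → ℝ) (θ β η : ℝ) (f : Euc n → ℝ) (x : Euc n) : ℝ≥0∞ :=
  ⨆ (x₀ : Euc n) (r : ℝ) (_ : 0 < r ∧ x ∈ cube x₀ r),
    ENNReal.ofReal (psi ρ θ x₀ r ^ (-η) * (psi ρ θ x₀ r * r ^ n) ^ (β / (n : ℝ))) *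
      eluxB (cube x₀ r) f

/-- The weighted fractional maximal operator
`M_{β,ω} f(x) = sup_{B ∋ x} ω(5B)^{β/n-1} ∫_B |f| ω` over balls. -/
def eMaxW (w : Euc n → ℝ) (β : ℝ) (f : Euc n → ℝ) (x : Euc n) : ℝ≥0∞ :=
  ⨆ (x₀ : Euc n) (r : ℝ) (_ : 0 < r ∧ x ∈ Metric.ball x₀ r),
    wSet w (Metric.ball x₀ (5 * r)) ^ (β / (n : ℝ) - 1) *
      ∫⁻ y in Metric.ball x₀ r, ENNReal.ofReal (|f y| * w y)

/-- The average of `b` over the ball `B(x₀,r)`. -/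
def ballAvg (b : Euc n → ℝ) (x₀ : Euc n) (r : ℝ) : ℝ :=
  (volume (Metric.ball x₀ r)).toReal⁻¹ * ∫ y in Metric.ball x₀ r, b y

/-- `h_φ(s) = sup_{t>0} φ(st)/φ(t)`. -/
def hGen (φ : ℝ → ℝ) (s : ℝ) : ℝ := ⨆ t : {t : ℝ // 0 < t}, φ (s * t.1) / φ t.1

/-- `Φ(s) = s / h_B(s^{β/n})` for `s > 0`, `Φ(0) = 0`, where `B(t) = t log(e+t)`. -/
def PhiB (n : ℕ) (β : ℝ) (s : ℝ) : ℝ :=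
  if 0 < s then s / hGen youngB (s ^ (β / (n : ℝ))) else 0

end Schrodinger

open Schrodinger

/-!
Select the maximal dyadic cubes on which the normalised average `(Ψ(Q)^η |Q|)⁻¹ ∫_Q |f|`
exceeds `λ`. Since `Ψ ≥ 1` and `f ∈ L¹`, such cubes have bounded size, so every cube of `Ω_λ`
lies in a maximal one, and maximal cubes are disjoint. By maximality the parent `Q'` of a
selected cube has average at most `λ`; when `r < ρ(x_Q)`, comparing `ρ` at the centres of `Q`
and `Q'` bounds `Ψ(Q')` by `(8 n C₀)^{(l₀+2)θ}`, which gives (ii). Off `Ω_λ` the averages over the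
dyadic cubes shrinking to `x` stay below `λ Ψ^η` while `Ψ → 1`, so Lebesgue differentiation
gives (iii); (iv) follows by summing `|Q| ≤ Ψ(Q)^η |Q| < λ⁻¹ ∫_Q |f|` over the disjoint cubes.
-/

namespace Schrodinger

open Filter Topology

variable {n : ℕ}

lemma dSide_pos (k : ℤ) : 0 < dSide k := zpow_pos two_pos (-k)

lemma dSide_sub_one (k : ℤ) : dSide (k - 1) = 2 * dSide k := by
  rw [dSide, dSide, neg_sub, sub_eq_neg_add, zpow_add_one₀ two_ne_zero, mul_comm]

def dyadicIndex (k : ℤ) (x : Euc n) : Fin n → ℤ := fun i => ⌊x i * 2 ^ k⌋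

lemma mem_dyadicCube_iff {k : ℤ} {m : Fin n → ℤ} {x : Euc n} :
    x ∈ dyadicCube k m ↔ m = dyadicIndex k x := by
  have h2 : (0 : ℝ) < 2 ^ k := zpow_pos two_pos k
  simp only [dyadicCube, mem_ofPred_eq, funext_iff, dyadicIndex, eq_comm (a := m _),
    Int.floor_eq_iff, zpow_neg, ← div_eq_mul_inv, div_le_iff₀ h2, lt_div_iff₀ h2]

lemma mem_dyadicCube_dyadicIndex (k : ℤ) (x : Euc n) : x ∈ dyadicCube k (dyadicIndex k x) :=
  mem_dyadicCube_iff.2 rfl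

lemma dyadicCenter_mem (k : ℤ) (m : Fin n → ℤ) : dyadicCenter k m ∈ dyadicCube k m := by
  have h2 : (0 : ℝ) < 2 ^ (-k) := zpow_pos two_pos _
  intro i
  change _ ≤ ((m i : ℝ) + 1 / 2) * 2 ^ (-k) ∧ ((m i : ℝ) + 1 / 2) * 2 ^ (-k) < _
  constructor <;> nlinarith

lemma dyadicIndex_of_le {j k : ℤ} (hjk : j ≤ k) (x : Euc n) (i : Fin n) :
    dyadicIndex j x i = dyadicIndex k x i / 2 ^ (k - j).toNat := by
  have hk : (2 : ℝ) ^ k = 2 ^ j * 2 ^ (k - j).toNat := by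
    rw [← zpow_natCast, ← zpow_add₀ two_ne_zero]
    congr 1
    omega
  have := Int.floor_div_natCast (x i * 2 ^ k) (2 ^ (k - j).toNat)
  push_cast at this
  rw [hk, ← mul_assoc, mul_div_cancel_right₀ _ (by positivity)] at this
  rw [dyadicIndex, dyadicIndex, this, hk, mul_assoc]

lemma dyadicCube_subset_of_le {j k : ℤ} (hjk : j ≤ k) (m : Fin n → ℤ) :
    dyadicCube k m ⊆ dyadicCube j (dyadicIndex j (dyadicCenter k m)) := by
  intro y hy
  rw [mem_dyadicCube_iff] at hy ⊢
  have hc := mem_dyadicCube_iff.1 (dyadicCenter_mem k m)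
  funext i
  rw [dyadicIndex_of_le hjk, dyadicIndex_of_le hjk, ← hy, ← hc]

lemma dyadicIndex_dyadicCenter_of_mem {j k : ℤ} (hjk : j ≤ k) {m : Fin n → ℤ} {x : Euc n}
    (hx : x ∈ dyadicCube k m) : dyadicIndex j (dyadicCenter k m) = dyadicIndex j x :=
  mem_dyadicCube_iff.1 (dyadicCube_subset_of_le hjk m hx)

lemma dyadicCube_eq_preimage (k : ℤ) (m : Fin n → ℤ) :
    dyadicCube k m = (MeasurableEquiv.toLp 2 (Fin n → ℝ)).symm ⁻¹'
      univ.pi fun i => Ico ((m i : ℝ) * 2 ^ (-k)) (((m i : ℝ) + 1) * 2 ^ (-k)) := by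
  ext y
  simp only [dyadicCube, mem_ofPred_eq, mem_preimage, mem_univ_pi, mem_Ico]
  rfl

lemma measurableSet_dyadicCube (k : ℤ) (m : Fin n → ℤ) : MeasurableSet (dyadicCube k m) := by
  rw [dyadicCube_eq_preimage]
  exact (MeasurableEquiv.toLp 2 (Fin n → ℝ)).symm.measurable
    (MeasurableSet.univ_pi fun _ => measurableSet_Ico)

lemma volume_dyadicCube (k : ℤ) (m : Fin n → ℤ) :
    volume (dyadicCube k m) = ENNReal.ofReal (dSide k ^ n) := by
  rw [dyadicCube_eq_preimage,
    (EuclideanSpace.volume_preserving_symm_measurableEquiv_toLp (Fin n)).measure_preimage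
      (MeasurableSet.univ_pi fun _ => measurableSet_Ico).nullMeasurableSet,
    volume_pi_pi, ENNReal.ofReal_pow (dSide_pos k).le]
  simp only [Real.volume_Ico, dSide, ← sub_mul, add_sub_cancel_left, one_mul,
    Finset.prod_const, Finset.card_univ, Fintype.card_fin]

lemma volume_real_dyadicCube (k : ℤ) (m : Fin n → ℤ) :
    volume.real (dyadicCube k m) = dSide k ^ n := by
  rw [measureReal_def, volume_dyadicCube, ENNReal.toReal_ofReal (pow_pos (dSide_pos k) n).le]

lemma setAverage_dyadicCube (k : ℤ) (m : Fin n → ℤ) (g : Euc n → ℝ) :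
    ⨍ y in dyadicCube k m, g y = (dSide k ^ n)⁻¹ * ∫ y in dyadicCube k m, g y := by
  rw [setAverage_eq, volume_real_dyadicCube, smul_eq_mul]

lemma dist_le_of_mem_dyadicCube {k : ℤ} {m : Fin n → ℤ} {x y : Euc n}
    (hx : x ∈ dyadicCube k m) (hy : y ∈ dyadicCube k m) : dist x y ≤ n * dSide k := by
  have hcoord : ∀ i, (x i - y i) ^ 2 ≤ dSide k ^ 2 := fun i => by
    obtain ⟨hx₁, hx₂⟩ := hx i
    obtain ⟨hy₁, hy₂⟩ := hy i
    rw [sq_le_sq, abs_of_pos (dSide_pos k), abs_le, dSide]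
    constructor <;> nlinarith
  have hn : (n : ℝ) ≤ n ^ 2 := by exact_mod_cast Nat.le_self_pow two_ne_zero n
  rw [EuclideanSpace.dist_eq, Real.sqrt_le_left (by positivity [dSide_pos k])]
  calc ∑ i, dist (x i) (y i) ^ 2 ≤ ∑ _i : Fin n, dSide k ^ 2 :=
        Finset.sum_le_sum fun i _ => by rw [Real.dist_eq, sq_abs]; exact hcoord i
    _ = n * dSide k ^ 2 := by simp
    _ ≤ (n * dSide k) ^ 2 := by rw [mul_pow]; gcongr

lemma abs_setAverage_sub_le {α : Type*} [MeasurableSpace α] {μ : Measure α} {s t : Set α}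
    {g : α → ℝ} {C : ℝ} (hst : s ⊆ t) (hg : IntegrableOn g t μ) (hs : μ s ≠ 0) (ht : μ t ≠ ∞)
    (hC : μ.real t ≤ C * μ.real s) (c : ℝ) :
    |⨍ y in s, g y ∂μ - c| ≤ C * ⨍ y in t, |g y - c| ∂μ := by
  have hs_fin : μ s ≠ ∞ := ne_top_of_le_ne_top ht (measure_mono hst)
  have hs_pos : 0 < μ.real s := ENNReal.toReal_pos hs hs_fin
  have ht_pos : 0 < μ.real t := hs_pos.trans_le (measureReal_mono hst ht)
  have hct : IntegrableOn (fun _ => c) t μ := integrableOn_const ht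
  have hsub : ⨍ y in s, g y ∂μ - c = (μ.real s)⁻¹ * ∫ y in s, (g y - c) ∂μ := by
    rw [setAverage_eq, integral_sub (hg.mono_set hst) (integrableOn_const hs_fin),
      setIntegral_const, smul_eq_mul, smul_eq_mul]
    field_simp
  calc |⨍ y in s, g y ∂μ - c| = (μ.real s)⁻¹ * |∫ y in s, (g y - c) ∂μ| := by
        rw [hsub, abs_mul, abs_of_pos (inv_pos.2 hs_pos)]
    _ ≤ (μ.real s)⁻¹ * ∫ y in t, |g y - c| ∂μ := by
        gcongr
        exact (abs_integral_le_integral_abs).trans <| setIntegral_mono_set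
          (hg.sub hct).abs (Eventually.of_forall fun _ => abs_nonneg _) hst.eventuallyLE
    _ = μ.real t / μ.real s * ⨍ y in t, |g y - c| ∂μ := by
        rw [setAverage_eq, smul_eq_mul]
        field_simp
    _ ≤ C * ⨍ y in t, |g y - c| ∂μ := by
        gcongr
        · rw [setAverage_eq, smul_eq_mul]
          exact mul_nonneg (by positivity) (integral_nonneg fun _ => abs_nonneg _)
        · rwa [div_le_iff₀ hs_pos]

lemma tendsto_dSide : Tendsto (fun k : ℕ => dSide k) atTop (𝓝 0) := by
  simp only [dSide, zpow_neg, zpow_natCast]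
  exact tendsto_inv_atTop_zero.comp (tendsto_pow_atTop_atTop_of_one_lt one_lt_two)

lemma dyadicCube_subset_closedBall {k : ℤ} {x : Euc n} :
    dyadicCube k (dyadicIndex k x) ⊆ closedBall x (n * dSide k) := fun _ hy =>
  mem_closedBall.2 (dist_le_of_mem_dyadicCube hy (mem_dyadicCube_dyadicIndex k x))

/-- Each dyadic cube containing `x` lies in a ball around `x` of comparable volume, so this
follows from Lebesgue differentiation along balls. -/
theorem ae_tendsto_setAverage_dyadicCube (hn : 0 < n) {g : Euc n → ℝ}
    (hg : LocallyIntegrable g volume) :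
    ∀ᵐ x, Tendsto (fun k : ℕ => ⨍ y in dyadicCube k (dyadicIndex k x), g y) atTop (𝓝 (g x)) := by
  filter_upwards [IsUnifLocDoublingMeasure.ae_tendsto_average_norm_sub volume hg 1] with x hx
  have hδ : Tendsto (fun k : ℕ => n * dSide k) atTop (𝓝[>] 0) := by
    refine tendsto_nhdsWithin_iff.2 ⟨by simpa using tendsto_dSide.const_mul (n : ℝ), ?_⟩
    exact Eventually.of_forall fun k => mul_pos (Nat.cast_pos.2 hn) (dSide_pos k)
  have hball := hx (fun _ => x) _ hδ <| Eventually.of_forall fun k =>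
    mem_closedBall_self (by simpa using (mul_pos (Nat.cast_pos.2 hn) (dSide_pos k)).le)
  simp only [Real.norm_eq_abs] at hball
  set C := (n : ℝ) ^ n * volume.real (ball (0 : Euc n) 1)
  rw [tendsto_iff_norm_sub_tendsto_zero]
  refine squeeze_zero (fun _ => norm_nonneg _) (fun k => ?_) (by simpa using hball.const_mul C)
  refine abs_setAverage_sub_le dyadicCube_subset_closedBall
    (hg.integrableOn_isCompact (isCompact_closedBall _ _)) ?_ measure_closedBall_lt_top.ne
    (le_of_eq ?_) (g x)
  · rw [volume_dyadicCube]
    exact (ENNReal.ofReal_pos.2 (pow_pos (dSide_pos k) n)).ne'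
  · rw [Measure.addHaar_real_closedBall _ _ (by positivity [dSide_pos k]), finrank_euclideanSpace,
      Fintype.card_fin, volume_real_dyadicCube]
    ring

variable {ρ : Euc n → ℝ} {C₀ l₀ θ : ℝ}

lemma psi_pos (hρ : ∀ x, 0 < ρ x) (θ : ℝ) (x : Euc n) {r : ℝ} (hr : 0 ≤ r) :
    0 < psi ρ θ x r :=
  Real.rpow_pos_of_pos (by have := hρ x; positivity) θ

lemma one_le_psi (hρ : ∀ x, 0 < ρ x) (hθ : 0 ≤ θ) (x : Euc n) {r : ℝ} (hr : 0 ≤ r) :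
    1 ≤ psi ρ θ x r :=
  Real.one_le_rpow (le_add_of_nonneg_right (div_nonneg hr (hρ x).le)) hθ

lemma tendsto_psi_of_le {ι : Type*} {l : Filter ι} {c : ι → Euc n} {r : ι → ℝ} {κ : ℝ}
    (hκ : 0 < κ) (hc : ∀ i, κ ≤ ρ (c i)) (hr0 : ∀ i, 0 ≤ r i) (hr : Tendsto r l (𝓝 0))
    (θ : ℝ) : Tendsto (fun i => psi ρ θ (c i) (r i)) l (𝓝 1) := by
  have hq : Tendsto (fun i => r i / ρ (c i)) l (𝓝 0) :=
    squeeze_zero (fun i => div_nonneg (hr0 i) (hκ.trans_le (hc i)).le)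
      (fun i => div_le_div_of_nonneg_left (hr0 i) hκ (hc i)) (by simpa using hr.div_const κ)
  simpa [psi] using (hq.const_add 1).rpow_const (p := θ) (Or.inl (by norm_num))

lemma one_add_two_mul_rpow_le {N : ℝ} (hN : 1 ≤ N) (hC₀ : 1 ≤ C₀) (hl₀ : 0 ≤ l₀) :
    1 + 2 * C₀ * (1 + 2 * N) ^ l₀ ≤ (8 * N * C₀) ^ (l₀ + 2) := by
  set B := 8 * N * C₀
  have hB : 1 ≤ B := by nlinarith
  have hX : (1 + 2 * N) ^ l₀ ≤ B ^ l₀ := Real.rpow_le_rpow (by positivity) (by nlinarith) hl₀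
  have hX1 : 1 ≤ (1 + 2 * N) ^ l₀ := Real.one_le_rpow (by linarith) hl₀
  calc 1 + 2 * C₀ * (1 + 2 * N) ^ l₀ ≤ 3 * C₀ * (1 + 2 * N) ^ l₀ := by nlinarith
    _ ≤ B * B ^ l₀ := by gcongr; nlinarith
    _ = B ^ (l₀ + 1) := by rw [Real.rpow_add_one (by positivity)]; ring
    _ ≤ B ^ (l₀ + 2) := Real.rpow_le_rpow_of_exponent_le hB (by linarith)

namespace IsCriticalRadius

lemma pos (hρ : IsCriticalRadius ρ C₀ l₀) : ∀ x, 0 < ρ x := hρ.2.2.1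

lemma le_of_dist_le (hρ : IsCriticalRadius ρ C₀ l₀) {x y : Euc n} {D : ℝ}
    (h : dist x y ≤ D * ρ x) : C₀⁻¹ * ρ x * (1 + D) ^ (-l₀) ≤ ρ y := by
  obtain ⟨hC₀, hl₀, hpos, hcr⟩ := hρ
  have hρx := hpos x
  have hC₀' : 0 < C₀ := by linarith
  refine le_trans (mul_le_mul_of_nonneg_left ?_ (by positivity)) (hcr x y).1
  exact Real.rpow_le_rpow_of_nonpos (by positivity)
    (by rwa [add_le_add_iff_left, div_le_iff₀ hρx]) (by linarith)

lemma tendsto_psi_dyadic (hρ : IsCriticalRadius ρ C₀ l₀) (θ : ℝ) (x : Euc n) :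
    Tendsto (fun k : ℕ => psi ρ θ (dyadicCenter k (dyadicIndex k x)) (dSide k)) atTop (𝓝 1) := by
  have hρx := hρ.pos x
  have hC₀ : 0 < C₀ := by linarith [hρ.1]
  refine tendsto_psi_of_le (κ := C₀⁻¹ * ρ x * (1 + n / ρ x) ^ (-l₀)) (by positivity)
    (fun k => hρ.le_of_dist_le ?_) (r := fun k : ℕ => dSide k) (fun k => (dSide_pos k).le)
    tendsto_dSide θ
  calc dist x (dyadicCenter k (dyadicIndex k x)) ≤ n * dSide k :=
        dist_le_of_mem_dyadicCube (mem_dyadicCube_dyadicIndex k x) (dyadicCenter_mem _ _)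
    _ ≤ n * 1 := by
        gcongr
        exact zpow_le_one_of_nonpos₀ one_le_two (by omega)
    _ = n / ρ x * ρ x := by field_simp

lemma psi_two_mul_le (hρ : IsCriticalRadius ρ C₀ l₀) (hθ : 0 ≤ θ) {N s : ℝ} (hN : 1 ≤ N)
    {c c' : Euc n} (hs0 : 0 ≤ s) (hs : s ≤ ρ c) (hd : dist c c' ≤ 2 * N * s) :
    psi ρ θ c' (2 * s) ≤ (8 * N * C₀) ^ ((l₀ + 2) * θ) := by
  obtain ⟨hC₀, hl₀, hpos, -⟩ := id hρ
  have hρc := hpos c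
  have hρc' : C₀⁻¹ * ρ c * (1 + 2 * N) ^ (-l₀) ≤ ρ c' :=
    hρ.le_of_dist_le (hd.trans (by gcongr))
  have hratio : 2 * s / ρ c' ≤ 2 * C₀ * (1 + 2 * N) ^ l₀ := by
    rw [Real.rpow_neg (by positivity)] at hρc'
    rw [div_le_iff₀ (hpos c')]
    calc 2 * s ≤ 2 * C₀ * (1 + 2 * N) ^ l₀ * (C₀⁻¹ * ρ c * ((1 + 2 * N) ^ l₀)⁻¹) := by
          field_simp
          linarith
      _ ≤ 2 * C₀ * (1 + 2 * N) ^ l₀ * ρ c' := by gcongr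
  rw [Real.rpow_mul (by positivity), psi]
  refine Real.rpow_le_rpow (by have := hpos c'; positivity) ?_ hθ
  calc 1 + 2 * s / ρ c' ≤ 1 + 2 * C₀ * (1 + 2 * N) ^ l₀ := by linarith
    _ ≤ _ := one_add_two_mul_rpow_le hN hC₀.le hl₀.le

end IsCriticalRadius

section Stopping

variable {P : ℤ × (Fin n → ℤ) → Prop}

/-- `(j, dyadicIndex j (dyadicCenter k m))` is the ancestor of generation `j` of the dyadic
cube `(k, m)`. -/
def maximalDyadic (P : ℤ × (Fin n → ℤ) → Prop) : Set (ℤ × (Fin n → ℤ)) :=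
  {q | P q ∧ ∀ j < q.1, ¬ P (j, dyadicIndex j (dyadicCenter q.1 q.2))}

lemma eq_of_mem_maximalDyadic {a b : ℤ × (Fin n → ℤ)} (ha : a ∈ maximalDyadic P)
    (hb : b ∈ maximalDyadic P) (hab : a.1 ≤ b.1) {x : Euc n} (hxa : x ∈ dyadicCube a.1 a.2)
    (hxb : x ∈ dyadicCube b.1 b.2) : a = b := by
  obtain ⟨ka, ma⟩ := a
  obtain ⟨kb, mb⟩ := b
  simp only [mem_dyadicCube_iff] at hxa hxb hab
  subst hxa hxb
  rcases hab.eq_or_lt with rfl | hlt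
  · rfl
  · have := hb.2 ka hlt
    rw [dyadicIndex_dyadicCenter_of_mem hlt.le (mem_dyadicCube_dyadicIndex kb x)] at this
    exact absurd ha.1 this

lemma pairwiseDisjoint_maximalDyadic (P : ℤ × (Fin n → ℤ) → Prop) :
    (maximalDyadic P).PairwiseDisjoint fun q => dyadicCube q.1 q.2 := by
  intro a ha b hb hab
  refine Set.disjoint_left.2 fun x hxa hxb => hab ?_
  rcases le_total a.1 b.1 with h | h
  · exact eq_of_mem_maximalDyadic ha hb h hxa hxb
  · exact (eq_of_mem_maximalDyadic hb ha h hxb hxa).symm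

lemma biUnion_maximalDyadic (hP : ∃ K, ∀ q, P q → K ≤ q.1) :
    ⋃ q ∈ maximalDyadic P, dyadicCube q.1 q.2 = {x : Euc n | ∃ k, P (k, dyadicIndex k x)} := by
  ext x
  simp only [mem_iUnion₂, mem_ofPred_eq]
  constructor
  · rintro ⟨q, hq, hx⟩
    exact ⟨q.1, mem_dyadicCube_iff.1 hx ▸ hq.1⟩
  · rintro ⟨k, hk⟩
    obtain ⟨K, hK⟩ := hP
    obtain ⟨k₀, hk₀, hmin⟩ := Int.exists_least_of_bdd (P := fun j => P (j, dyadicIndex j x))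
      ⟨K, fun j hj => hK _ hj⟩ ⟨k, hk⟩
    refine ⟨(k₀, dyadicIndex k₀ x), ⟨hk₀, fun j hj hPj => ?_⟩, mem_dyadicCube_dyadicIndex k₀ x⟩
    rw [dyadicIndex_dyadicCenter_of_mem hj.le (mem_dyadicCube_dyadicIndex k₀ x)] at hPj
    exact absurd (hmin j hPj) (not_le.2 hj)

end Stopping

lemma measure_biUnion_le_mul_lintegral {α ι : Type*} [MeasurableSpace α] {μ : Measure α}
    {S : Set ι} {s : ι → Set α} (hS : S.Countable) (hdisj : S.PairwiseDisjoint s)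
    (hmeas : ∀ i ∈ S, MeasurableSet (s i)) {g : α → ℝ≥0∞} {c : ℝ≥0∞}
    (h : ∀ i ∈ S, μ (s i) ≤ c * ∫⁻ x in s i, g x ∂μ) :
    μ (⋃ i ∈ S, s i) ≤ c * ∫⁻ x, g x ∂μ :=
  calc μ (⋃ i ∈ S, s i) ≤ ∑' i : S, μ (s i) := measure_biUnion_le μ hS s
    _ ≤ ∑' i : S, c * ∫⁻ x in s i, g x ∂μ := ENNReal.tsum_le_tsum fun i => h i i.2
    _ = c * ∫⁻ x in ⋃ i ∈ S, s i, g x ∂μ := by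
        rw [ENNReal.tsum_mul_left, lintegral_biUnion hS hmeas hdisj]
    _ ≤ c * ∫⁻ x, g x ∂μ := mul_le_mul_right (setLIntegral_le_lintegral _ _) c

variable {η lam : ℝ} {f : Euc n → ℝ}

/-- `Ψ(Q)^η |Q|` for the dyadic cube `Q = (k, m)`. -/
def psiVol (ρ : Euc n → ℝ) (θ η : ℝ) (k : ℤ) (m : Fin n → ℤ) : ℝ :=
  psi ρ θ (dyadicCenter k m) (dSide k) ^ η * dSide k ^ n

def psiAvg (ρ : Euc n → ℝ) (θ η : ℝ) (f : Euc n → ℝ) (k : ℤ) (m : Fin n → ℤ) : ℝ :=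
  (psiVol ρ θ η k m)⁻¹ * ∫ y in dyadicCube k m, |f y|

lemma psiVol_pos (hρ : ∀ x, 0 < ρ x) (θ η : ℝ) (k : ℤ) (m : Fin n → ℤ) :
    0 < psiVol ρ θ η k m :=
  mul_pos (Real.rpow_pos_of_pos (psi_pos hρ θ _ (dSide_pos k).le) η) (pow_pos (dSide_pos k) n)

lemma dSide_pow_le_psiVol (hρ : ∀ x, 0 < ρ x) (hθ : 0 ≤ θ) (hη : 0 ≤ η) (k : ℤ)
    (m : Fin n → ℤ) : dSide k ^ n ≤ psiVol ρ θ η k m :=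
  le_mul_of_one_le_left (pow_nonneg (dSide_pos k).le n)
    (Real.one_le_rpow (one_le_psi hρ hθ _ (dSide_pos k).le) hη)

lemma psiAvg_nonneg (hρ : ∀ x, 0 < ρ x) (k : ℤ) (m : Fin n → ℤ) : 0 ≤ psiAvg ρ θ η f k m :=
  mul_nonneg (inv_nonneg.2 (psiVol_pos hρ θ η k m).le) (integral_nonneg fun _ => abs_nonneg _)

lemma psiAvg_eq_inv_mul_setAverage (k : ℤ) (m : Fin n → ℤ) :
    psiAvg ρ θ η f k m =
      (psi ρ θ (dyadicCenter k m) (dSide k) ^ η)⁻¹ * ⨍ y in dyadicCube k m, |f y| := by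
  rw [psiAvg, psiVol, setAverage_dyadicCube, mul_inv, mul_assoc]

lemma lintegral_ofl {μ : Measure (Euc n)} (hf : Integrable f μ) :
    ∫⁻ y, ofl f y ∂μ = ENNReal.ofReal (∫ y, |f y| ∂μ) :=
  (ofReal_integral_eq_lintegral_ofReal hf.abs (Eventually.of_forall fun _ => abs_nonneg _)).symm

lemma ofReal_lt_eMD_iff (hρ : ∀ x, 0 < ρ x) (hf : Integrable f volume) (hlam : 0 ≤ lam)
    (x : Euc n) :
    ENNReal.ofReal lam < eMD ρ θ η (ofl f) x ↔ ∃ k, lam < psiAvg ρ θ η f k (dyadicIndex k x) := by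
  have hterm : ∀ k m, (ENNReal.ofReal (psi ρ θ (dyadicCenter k m) (dSide k) ^ η * dSide k ^ n))⁻¹ *
      ∫⁻ y in dyadicCube k m, ofl f y = ENNReal.ofReal (psiAvg ρ θ η f k m) := fun k m => by
    have hw : 0 < psi ρ θ (dyadicCenter k m) (dSide k) ^ η * dSide k ^ n := psiVol_pos hρ θ η k m
    rw [psiAvg, psiVol, ENNReal.ofReal_mul (inv_nonneg.2 hw.le), ENNReal.ofReal_inv_of_pos hw,
      lintegral_ofl hf.integrableOn]
  simp only [eMD, hterm, lt_iSup_iff, mem_dyadicCube_iff, exists_prop, exists_eq_left,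
    ENNReal.ofReal_lt_ofReal_iff_of_nonneg hlam]

/-- Since `Ψ ≥ 1`, a cube with average above `λ` has volume below `‖f‖₁ / λ`. -/
lemma exists_le_of_lt_psiAvg (hn : 0 < n) (hρ : ∀ x, 0 < ρ x) (hθ : 0 ≤ θ) (hη : 0 ≤ η)
    (hf : Integrable f volume) (hlam : 0 < lam) :
    ∃ K : ℤ, ∀ q : ℤ × (Fin n → ℤ), lam < psiAvg ρ θ η f q.1 q.2 → K ≤ q.1 := by
  obtain ⟨N, hN⟩ := pow_unbounded_of_one_lt ((∫ x, |f x|) / lam) one_lt_two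
  refine ⟨-N, fun ⟨k, m⟩ hq => ?_⟩
  by_contra! hk
  have h2N : (2 : ℝ) ^ N ≤ dSide k := by
    rw [dSide, ← zpow_natCast]
    exact zpow_le_zpow_right₀ one_le_two (by simp only at hk; omega)
  have hw : (2 : ℝ) ^ N ≤ psiVol ρ θ η k m :=
    calc (2 : ℝ) ^ N ≤ dSide k := h2N
      _ ≤ dSide k ^ n := le_self_pow₀ ((one_le_pow₀ one_le_two).trans h2N) hn.ne'
      _ ≤ _ := dSide_pow_le_psiVol hρ hθ hη k m
  have hI : 0 ≤ ∫ x, |f x| := integral_nonneg fun _ => abs_nonneg _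
  have hle : psiAvg ρ θ η f k m ≤ (∫ x, |f x|) / 2 ^ N :=
    calc psiAvg ρ θ η f k m ≤ (∫ x, |f x|) / psiVol ρ θ η k m := by
          rw [psiAvg, inv_mul_eq_div]
          exact div_le_div_of_nonneg_right (setIntegral_le_integral hf.abs
            (Eventually.of_forall fun _ => abs_nonneg _)) (psiVol_pos hρ θ η k m).le
      _ ≤ (∫ x, |f x|) / 2 ^ N := div_le_div_of_nonneg_left hI (by positivity) hw
  have hlt := hq.trans_le hle
  rw [div_lt_iff₀ hlam] at hN
  rw [lt_div_iff₀ (by positivity)] at hlt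
  linarith

lemma volume_dyadicCube_le_of_lt_psiAvg (hρ : ∀ x, 0 < ρ x) (hθ : 0 ≤ θ) (hη : 0 ≤ η)
    (hf : Integrable f volume) (hlam : 0 < lam) {k : ℤ} {m : Fin n → ℤ}
    (h : lam < psiAvg ρ θ η f k m) :
    volume (dyadicCube k m) ≤ ENNReal.ofReal lam⁻¹ * ∫⁻ y in dyadicCube k m, ofl f y := by
  have hlt : psiVol ρ θ η k m < lam⁻¹ * ∫ y in dyadicCube k m, |f y| := by
    rwa [lt_inv_mul_iff₀ hlam, mul_comm, ← lt_inv_mul_iff₀ (psiVol_pos hρ θ η k m)]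
  rw [volume_dyadicCube, lintegral_ofl hf.integrableOn, ← ENNReal.ofReal_mul (by positivity)]
  exact ENNReal.ofReal_le_ofReal ((dSide_pow_le_psiVol hρ hθ hη k m).trans hlt.le)

lemma setAverage_le_of_psiAvg_parent_le (hρ : IsCriticalRadius ρ C₀ l₀) (hn : 0 < n)
    (hθ : 0 ≤ θ) (hη : 0 ≤ η) (hf : Integrable f volume) {k : ℤ} {m : Fin n → ℤ}
    (hr : dSide k < ρ (dyadicCenter k m))
    (hparent : psiAvg ρ θ η f (k - 1) (dyadicIndex (k - 1) (dyadicCenter k m)) ≤ lam) :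
    ⨍ y in dyadicCube k m, |f y| ≤ 2 ^ n * (8 * n * C₀) ^ ((l₀ + 2) * θ * η) * lam := by
  set m' := dyadicIndex (k - 1) (dyadicCenter k m)
  set c' := dyadicCenter (k - 1) m' with hc'
  have hsub : dyadicCube k m ⊆ dyadicCube (k - 1) m' := dyadicCube_subset_of_le (by omega) m
  have hdist : dist (dyadicCenter k m) c' ≤ 2 * n * dSide k :=
    (dist_le_of_mem_dyadicCube (hsub (dyadicCenter_mem k m)) (dyadicCenter_mem _ _)).trans_eq
      (by rw [dSide_sub_one]; ring)
  have hψ : psi ρ θ c' (dSide (k - 1)) ^ η ≤ (8 * n * C₀) ^ ((l₀ + 2) * θ * η) := by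
    rw [dSide_sub_one, Real.rpow_mul (mul_nonneg (by positivity) (by linarith [hρ.1]))]
    exact Real.rpow_le_rpow (psi_pos hρ.pos θ _ (by positivity [dSide_pos k])).le
      (hρ.psi_two_mul_le hθ (Nat.one_le_cast.2 hn) (dSide_pos k).le hr.le hdist) hη
  have hQ' : ∫ y in dyadicCube (k - 1) m', |f y| ≤ psiVol ρ θ η (k - 1) m' * lam := by
    rwa [psiAvg, inv_mul_le_iff₀ (psiVol_pos hρ.pos θ η _ _)] at hparent
  have hlam := (psiAvg_nonneg hρ.pos _ _).trans hparent
  have hs := pow_pos (dSide_pos k) n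
  calc ⨍ y in dyadicCube k m, |f y|
      ≤ (dSide k ^ n)⁻¹ * ∫ y in dyadicCube (k - 1) m', |f y| := by
        rw [setAverage_dyadicCube]
        refine mul_le_mul_of_nonneg_left ?_ (inv_nonneg.2 hs.le)
        exact setIntegral_mono_set hf.abs.integrableOn
          (Eventually.of_forall fun _ => abs_nonneg _) hsub.eventuallyLE
    _ ≤ (dSide k ^ n)⁻¹ * (psiVol ρ θ η (k - 1) m' * lam) := by gcongr
    _ = 2 ^ n * psi ρ θ c' (dSide (k - 1)) ^ η * lam := by
        rw [psiVol, ← hc', dSide_sub_one, mul_pow]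
        field_simp
    _ ≤ 2 ^ n * (8 * n * C₀) ^ ((l₀ + 2) * θ * η) * lam := by gcongr

lemma ae_abs_le_of_forall_psiAvg_le (hρ : IsCriticalRadius ρ C₀ l₀) (hn : 0 < n)
    (hf : Integrable f volume) :
    ∀ᵐ x, (∀ k : ℕ, psiAvg ρ θ η f k (dyadicIndex k x) ≤ lam) → |f x| ≤ lam := by
  filter_upwards [ae_tendsto_setAverage_dyadicCube hn hf.abs.locallyIntegrable] with x hx hle
  have hψ := ((hρ.tendsto_psi_dyadic θ x).rpow_const (p := η) (Or.inl one_ne_zero)).const_mul lam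
  rw [Real.one_rpow, mul_one] at hψ
  refine le_of_tendsto_of_tendsto' hx hψ fun k => ?_
  have hpos := Real.rpow_pos_of_pos (psi_pos hρ.pos θ (dyadicCenter k (dyadicIndex k x))
    (dSide_pos k).le) η
  have := hle k
  rwa [psiAvg_eq_inv_mul_setAverage, inv_mul_le_iff₀ hpos, mul_comm] at this

end Schrodinger

/-- Lemma 2.4, Calderón–Zygmund decomposition. -/
theorem stmt4 (n : ℕ) (hn : 0 < n) (ρ : Euc n → ℝ) (C₀ l₀ : ℝ)
    (hρ : IsCriticalRadius ρ C₀ l₀) (θ : ℝ) (hθ : 0 ≤ θ) (η : ℝ) (hη : 0 < η)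
    (f : Euc n → ℝ) (hf : Integrable f volume) (lam : ℝ) (hlam : 0 < lam) :
    ∃ S : Set (ℤ × (Fin n → ℤ)),
      (S.PairwiseDisjoint fun km => dyadicCube km.1 km.2) ∧
      ({x : Euc n | ENNReal.ofReal lam < eMD ρ θ η (ofl f) x} =
        ⋃ km ∈ S, dyadicCube km.1 km.2) ∧
      (∀ km ∈ S, lam <
        (psi ρ θ (dyadicCenter km.1 km.2) (dSide km.1) ^ η * dSide km.1 ^ n)⁻¹ *
          ∫ y in dyadicCube km.1 km.2, |f y|) ∧
      (∀ km ∈ S, dSide km.1 < ρ (dyadicCenter km.1 km.2) →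
        (dSide km.1 ^ n)⁻¹ * ∫ y in dyadicCube km.1 km.2, |f y| ≤
          2 ^ n * (8 * n * C₀) ^ ((l₀ + 2) * θ * η) * lam) ∧
      (∀ᵐ x : Euc n, x ∉ (⋃ km ∈ S, dyadicCube km.1 km.2) → |f x| ≤ lam) ∧
      volume {x : Euc n | ENNReal.ofReal lam < eMD ρ θ η (ofl f) x} ≤
        ENNReal.ofReal (lam⁻¹ * ∫ x, |f x|) := by
  have hρpos := hρ.pos
  set S := maximalDyadic fun q => lam < psiAvg ρ θ η f q.1 q.2
  have hΩ : {x : Euc n | ENNReal.ofReal lam < eMD ρ θ η (ofl f) x} =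
      ⋃ q ∈ S, dyadicCube q.1 q.2 := by
    rw [biUnion_maximalDyadic (exists_le_of_lt_psiAvg hn hρpos hθ hη.le hf hlam)]
    ext x
    exact ofReal_lt_eMD_iff hρpos hf hlam.le x
  refine ⟨S, pairwiseDisjoint_maximalDyadic _, hΩ, fun q hq => hq.1, ?_, ?_, ?_⟩
  · rintro ⟨k, m⟩ hq hr
    rw [← setAverage_dyadicCube]
    exact setAverage_le_of_psiAvg_parent_le hρ hn hθ hη.le hf hr
      (not_lt.1 (hq.2 (k - 1) (by simp)))
  · filter_upwards [ae_abs_le_of_forall_psiAvg_le (θ := θ) (η := η) (lam := lam) hρ hn hf]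
      with x hx hxS
    refine hx fun k => not_lt.1 fun hk => hxS ?_
    rw [← hΩ]
    exact (ofReal_lt_eMD_iff hρpos hf hlam.le x).2 ⟨k, hk⟩
  · rw [hΩ, ENNReal.ofReal_mul (inv_nonneg.2 hlam.le), ← lintegral_ofl hf]
    exact measure_biUnion_le_mul_lintegral S.to_countable (pairwiseDisjoint_maximalDyadic _)
      (fun q _ => measurableSet_dyadicCube q.1 q.2)
      fun q hq => volume_dyadicCube_le_of_lt_psiAvg hρpos hθ hη.le hf hlam hq.1
end
end

section
/- Let ρ be a critical radius function on ℝ^n with constants C_0, l_0, let θ > 0, and suppose f ∈ BMO_θ(ρ). Then there exist positive constants γ and C such that sup over balls B of |B|^{-1} ∫_B exp( γ |f(x) − f_B| / ( ‖f‖_{BMO_θ(ρ)} Ψ_{θ'}(B) ) ) dx ≤ C, where Ψ_{θ'}(B) = (1 + r/ρ(x_0))^{θ'} for B = B(x_0, r) and θ' = (l_0 + 1)θ. -/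
open MeasureTheory Metric Set
open scoped ENNReal

noncomputable section

open Schrodinger

/-!
Fix `B = B(x₀, r)`. The lower bound in the definition of a critical radius function gives
`Ψ_θ(B(y, u)) ≲ Ψ_{θ'}(B)` for every ball `B(y, u) ⊆ 3B`, so on the subballs of `3B` the function
`f` has mean oscillation at most `A ≍ M Ψ_{θ'}(B)`, and the classical John–Nirenberg argument runs
with this local constant. Around each Lebesgue point of `{|f - f_B| > (k + 1) L}` stop at a radius
where the mean of `|f - f_B|` over the ball exceeds `L` but is at most `L` over the fivefold ball;
the fivefold enlargements of a Vitali subfamily of the stopping balls have total measure at most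
`|B| / 2`, and on each of them the average of `f` is within `L` of `f_B`. Induction gives
`|{x ∈ B : |f - f_B| > k L}| ≤ 2⁻ᵏ |B|`, and summing over the layers gives the exponential bound.
-/

open Filter Module
open scoped Topology

namespace JohnNirenberg

section Integrals

variable {X : Type*} [MeasurableSpace X] {μ : Measure X} {f : X → ℝ} {s : Set X}

lemma mul_abs_sub_le_setIntegral_add (hf : IntegrableOn f s μ) (hs : μ s ≠ ⊤) (c c' : ℝ) :
    μ.real s * |c - c'| ≤ (∫ x in s, |f x - c| ∂μ) + ∫ x in s, |f x - c'| ∂μ := by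
  have hint : ∀ c : ℝ, IntegrableOn (fun x => |f x - c|) s μ :=
    fun c => (hf.sub (integrableOn_const hs)).abs
  calc μ.real s * |c - c'| = ∫ _ in s, |c - c'| ∂μ := by rw [setIntegral_const, smul_eq_mul]
    _ ≤ ∫ x in s, (|f x - c| + |f x - c'|) ∂μ :=
        setIntegral_mono (integrableOn_const hs) ((hint c).add (hint c')) fun x => by
          simpa only [abs_sub_comm (f x) c] using abs_sub_le c (f x) c'
    _ = _ := integral_add (hint c) (hint c')

lemma setIntegral_abs_sub_le_add (hf : IntegrableOn f s μ) (hs : μ s ≠ ⊤) (c c' : ℝ) :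
    ∫ x in s, |f x - c| ∂μ ≤ (∫ x in s, |f x - c'| ∂μ) + |c' - c| * μ.real s := by
  have hint : IntegrableOn (fun x => |f x - c'|) s μ := (hf.sub (integrableOn_const hs)).abs
  calc ∫ x in s, |f x - c| ∂μ ≤ ∫ x in s, (|f x - c'| + |c' - c|) ∂μ :=
        setIntegral_mono ((hf.sub (integrableOn_const hs)).abs)
          (hint.add (integrableOn_const hs)) fun x => abs_sub_le (f x) c' c
    _ = _ := by rw [integral_add hint (integrableOn_const hs), setIntegral_const, smul_eq_mul,
          mul_comm]

lemma mul_abs_setAverage_sub_le (hf : IntegrableOn f s μ) (hs : μ s ≠ ⊤) (c : ℝ) :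
    μ.real s * |(⨍ x in s, f x ∂μ) - c| ≤ ∫ x in s, |f x - c| ∂μ := by
  rcases eq_or_ne (μ s) 0 with h0 | h0
  · simp [measureReal_def, h0]
  have hpos : 0 < μ.real s := ENNReal.toReal_pos h0 hs
  calc μ.real s * |(⨍ x in s, f x ∂μ) - c| = |∫ x in s, (f x - c) ∂μ| := by
        rw [integral_sub hf (integrableOn_const hs), setIntegral_const, smul_eq_mul,
          setAverage_eq, smul_eq_mul, ← abs_of_pos hpos, ← abs_mul, abs_of_pos hpos, mul_sub,
          mul_inv_cancel_left₀ hpos.ne']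
    _ ≤ ∫ x in s, |f x - c| ∂μ := abs_integral_le_integral_abs

lemma tsum_mul_measure_le_setLIntegral {ι : Type*} [Countable ι] {B : ι → Set X}
    (hmeas : ∀ i, MeasurableSet (B i)) (hdisj : Pairwise (Function.onFun Disjoint B))
    {S : Set X} (hsub : ∀ i, B i ⊆ S) {c : ℝ≥0∞} {g : X → ℝ≥0∞}
    (h : ∀ i, c * μ (B i) ≤ ∫⁻ x in B i, g x ∂μ) :
    c * ∑' i, μ (B i) ≤ ∫⁻ x in S, g x ∂μ :=
  calc c * ∑' i, μ (B i) = ∑' i, c * μ (B i) := ENNReal.tsum_mul_left.symm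
    _ ≤ ∑' i, ∫⁻ x in B i, g x ∂μ := ENNReal.tsum_le_tsum h
    _ = ∫⁻ x in ⋃ i, B i, g x ∂μ := (lintegral_iUnion hmeas hdisj g).symm
    _ ≤ ∫⁻ x in S, g x ∂μ := lintegral_mono_set (iUnion_subset hsub)

variable {g : X → ℝ} {L : ℝ}

lemma measure_layer_le (hL : 0 < L) (h : ∀ k : ℕ, μ {x ∈ s | k * L < g x} ≤ 2⁻¹ ^ k * μ s)
    (k : ℕ) : μ {x ∈ s | k * L ≤ g x ∧ g x < (k + 1) * L} ≤ 2 * 2⁻¹ ^ k * μ s := by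
  cases k with
  | zero =>
    rw [pow_zero, mul_one]
    exact (measure_mono (sep_subset s _)).trans (le_mul_of_one_le_left' one_le_two)
  | succ j =>
    calc μ {x ∈ s | ((j + 1 : ℕ) : ℝ) * L ≤ g x ∧ g x < ((j + 1 : ℕ) + 1) * L}
        ≤ μ {x ∈ s | j * L < g x} :=
          measure_mono fun x ⟨hxs, hlow, _⟩ => ⟨hxs, by push_cast at hlow; linarith⟩
      _ ≤ 2⁻¹ ^ j * μ s := h j
      _ = 2 * 2⁻¹ ^ (j + 1) * μ s := by
        rw [pow_succ', ← mul_assoc, ENNReal.mul_inv_cancel two_ne_zero ENNReal.ofNat_ne_top,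
          one_mul]

lemma setLIntegral_exp_le_of_measure_lt_le (hL : 0 < L) (hg : ∀ x ∈ s, 0 ≤ g x)
    (h : ∀ k : ℕ, μ {x ∈ s | k * L < g x} ≤ 2⁻¹ ^ k * μ s) :
    ∫⁻ x in s, ENNReal.ofReal (Real.exp (Real.log (3 / 2) * g x / L)) ∂μ ≤ 12 * μ s := by
  set D : ℕ → Set X := fun k => {x ∈ s | k * L ≤ g x ∧ g x < (k + 1) * L}
  have hcover : s ⊆ ⋃ k, D k := fun x hx => mem_iUnion.2 ⟨⌊g x / L⌋₊, hx,
    (le_div_iff₀ hL).1 (Nat.floor_le (div_nonneg (hg x hx) hL.le)),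
    (div_lt_iff₀ hL).1 (Nat.lt_floor_add_one (g x / L))⟩
  have hexp : ∀ k, ∀ x ∈ D k, ENNReal.ofReal (Real.exp (Real.log (3 / 2) * g x / L)) ≤
      ENNReal.ofReal ((3 / 2) ^ (k + 1)) := fun k x hx => by
    refine ENNReal.ofReal_le_ofReal ?_
    calc Real.exp (Real.log (3 / 2) * g x / L) ≤ Real.exp ((k + 1 : ℕ) * Real.log (3 / 2)) := by
          rw [Real.exp_le_exp, mul_div_assoc, mul_comm]
          push_cast
          exact mul_le_mul_of_nonneg_right ((div_le_iff₀ hL).2 hx.2.2.le)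
            (Real.log_nonneg (by norm_num))
      _ = (3 / 2) ^ (k + 1) := by rw [Real.exp_nat_mul, Real.exp_log (by norm_num)]
  have hsum : ∑' k : ℕ, ENNReal.ofReal ((3 / 2) ^ (k + 1) * (2 * (1 / 2) ^ k)) = 12 := by
    have hterm : ∀ k : ℕ, (3 / 2 : ℝ) ^ (k + 1) * (2 * (1 / 2) ^ k) = 3 * (3 / 4) ^ k := fun k => by
      rw [pow_succ, show (3 / 4 : ℝ) = 3 / 2 * (1 / 2) by norm_num, mul_pow]; ring
    simp_rw [hterm]
    rw [← ENNReal.ofReal_tsum_of_nonneg (fun k => by positivity)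
      ((summable_geometric_of_lt_one (by norm_num) (by norm_num)).mul_left 3), tsum_mul_left,
      tsum_geometric_of_lt_one (by norm_num) (by norm_num)]
    norm_num
  calc ∫⁻ x in s, ENNReal.ofReal (Real.exp (Real.log (3 / 2) * g x / L)) ∂μ
      ≤ ∑' k, ∫⁻ x in D k, ENNReal.ofReal (Real.exp (Real.log (3 / 2) * g x / L)) ∂μ :=
        (lintegral_mono_set hcover).trans (lintegral_iUnion_le _ _)
    _ ≤ ∑' k : ℕ, ENNReal.ofReal ((3 / 2) ^ (k + 1)) * μ (D k) := ENNReal.tsum_le_tsum fun k =>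
        (setLIntegral_mono measurable_const (hexp k)).trans_eq (setLIntegral_const _ _)
    _ ≤ ∑' k : ℕ, ENNReal.ofReal ((3 / 2) ^ (k + 1) * (2 * (1 / 2) ^ k)) * μ s :=
        ENNReal.tsum_le_tsum fun k => by
          rw [ENNReal.ofReal_mul (by positivity), mul_assoc,
            show ENNReal.ofReal (2 * (1 / 2) ^ k) = 2 * 2⁻¹ ^ k by
              simp [ENNReal.ofReal_mul, ENNReal.ofReal_pow, ENNReal.inv_pow]]
          exact mul_le_mul_right (measure_layer_le hL h k) _
    _ = 12 * μ s := by rw [ENNReal.tsum_mul_right, hsum]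

end Integrals

lemma exists_mem_Ioc_and_not_of_eventually {P : ℝ → Prop} (hP : ∀ᶠ t in 𝓝[>] 0, P t)
    {a c : ℝ} (ha : 0 < a) (hc : 1 < c) :
    ∃ t ∈ Ioc 0 a, P t ∧ (c * t ≤ a → ¬ P (c * t)) := by
  set S := {t ∈ Ioc 0 a | P t}
  obtain ⟨t₀, ht₀P, ht₀⟩ := (hP.and (Ioc_mem_nhdsGT ha)).exists
  have hbdd : BddAbove S := ⟨a, fun t ht => ht.1.2⟩
  have hT : 0 < sSup S := ht₀.1.trans_le (le_csSup hbdd ⟨ht₀, ht₀P⟩)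
  obtain ⟨t, ht, hlt⟩ :=
    exists_lt_of_lt_csSup (show S.Nonempty from ⟨t₀, ht₀, ht₀P⟩) (div_lt_self hT hc)
  refine ⟨t, ht.1, ht.2, fun hca hPc => ?_⟩
  have hle := le_csSup hbdd (show c * t ∈ S from ⟨⟨by nlinarith [ht.1.1], hca⟩, hPc⟩)
  rw [div_lt_iff₀ (by linarith)] at hlt
  linarith

section Balls

variable {α : Type*} [PseudoMetricSpace α]

lemma exists_countable_pairwiseDisjoint_ball_cover [TopologicalSpace.SeparableSpace α]
    (t : Set α) (r : α → ℝ) {R : ℝ} (hr : ∀ x ∈ t, 0 < r x ∧ r x ≤ R) :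
    ∃ u ⊆ t, u.Countable ∧ u.PairwiseDisjoint (fun x => ball x (r x)) ∧
      t ⊆ ⋃ x ∈ u, ball x (5 * r x) := by
  obtain ⟨u, hut, hdisj, hcover⟩ :=
    Vitali.exists_disjoint_subfamily_covering_enlargement_closedBall t id r R
      (fun x hx => (hr x hx).2) 4 (by norm_num)
  refine ⟨u, hut, hdisj.countable_of_nonempty_interior fun x hx =>
      (nonempty_ball.2 (hr x (hut hx)).1).mono ball_subset_interior_closedBall,
    hdisj.mono fun x => ball_subset_closedBall, fun x hx => ?_⟩
  obtain ⟨b, hb, hsub⟩ := hcover x hx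
  have hxb : dist x b ≤ 4 * r b := hsub (mem_closedBall_self (hr x hx).1.le)
  exact mem_biUnion hb (mem_ball.2 (by linarith [(hr b (hut hb)).1]))

variable [ProperSpace α] [MeasurableSpace α] {μ : Measure α} {f : α → ℝ}

lemma _root_.MeasureTheory.LocallyIntegrable.integrableOn_ball (hf : LocallyIntegrable f μ)
    (x : α) (u : ℝ) : IntegrableOn f (ball x u) μ :=
  (hf.integrableOn_isCompact (isCompact_closedBall x u)).mono_set ball_subset_closedBall

variable [μ.IsOpenPosMeasure] [IsFiniteMeasureOnCompacts μ]

lemma measureReal_ball_pos (x : α) {u : ℝ} (hu : 0 < u) : 0 < μ.real (ball x u) :=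
  ENNReal.toReal_pos (measure_ball_pos μ x hu).ne' measure_ball_lt_top.ne

lemma eventually_mul_measureReal_lt_setIntegral (hf : LocallyIntegrable f μ) {y : α} {m L : ℝ}
    (hleb : Tendsto (fun t => ⨍ w in ball y t, |f w - f y| ∂μ) (𝓝[>] 0) (𝓝 0))
    (hL : L < |f y - m|) :
    ∀ᶠ t in 𝓝[>] 0, L * μ.real (ball y t) < ∫ w in ball y t, |f w - m| ∂μ := by
  filter_upwards [hleb.eventually_lt_const (sub_pos.2 hL), self_mem_nhdsWithin] with t ht htpos
  rw [setAverage_eq, smul_eq_mul, inv_mul_lt_iff₀ (measureReal_ball_pos y htpos), mul_sub] at ht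
  have := mul_abs_sub_le_setIntegral_add (hf.integrableOn_ball y t) measure_ball_lt_top.ne (f y) m
  linarith

lemma measure_inter_ball_le_of_stopping (hf : LocallyIntegrable f μ) {x₀ : α} {R L : ℝ}
    {k : ℕ} (ih : ∀ (z : α) (s : ℝ), 0 < s → 3 * s + dist z x₀ ≤ R →
      μ {x ∈ ball z s | k * L < |f x - ⨍ w in ball z s, f w ∂μ|} ≤ 2⁻¹ ^ k * μ (ball z s))
    {z : α} {s : ℝ} (hz : 3 * s + dist z x₀ ≤ R) {b : α} (hb : b ∈ ball z s) {t : ℝ}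
    (ht : t ∈ Ioc 0 (s / 20))
    (hstop : ∫ x in ball b (5 * t), |f x - ⨍ w in ball z s, f w ∂μ| ∂μ ≤
      L * μ.real (ball b (5 * t))) :
    μ ({x ∈ ball z s | ((k + 1 : ℕ) : ℝ) * L < |f x - ⨍ w in ball z s, f w ∂μ|} ∩
      ball b (5 * t)) ≤ 2⁻¹ ^ k * μ (ball b (5 * t)) := by
  have h5t : 0 < 5 * t := by linarith [ht.1]
  have hclose : |(⨍ w in ball b (5 * t), f w ∂μ) - ⨍ w in ball z s, f w ∂μ| ≤ L :=
    le_of_mul_le_mul_left ((mul_abs_setAverage_sub_le (hf.integrableOn_ball _ _)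
      measure_ball_lt_top.ne _).trans (hstop.trans_eq (mul_comm _ _)))
      (measureReal_ball_pos b h5t)
  refine (measure_mono ?_).trans (ih b (5 * t) h5t ?_)
  · rintro x ⟨⟨-, hx⟩, hxb⟩
    refine ⟨hxb, ?_⟩
    push_cast at hx
    linarith [abs_sub_le (f x) (⨍ w in ball b (5 * t), f w ∂μ) (⨍ w in ball z s, f w ∂μ)]
  · linarith [mem_ball.1 hb, dist_triangle b z x₀, ht.2]

end Balls

section HaarBalls

variable {E : Type*} [NormedAddCommGroup E] [NormedSpace ℝ E] [FiniteDimensional ℝ E]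
  [MeasurableSpace E] [BorelSpace E] (μ : Measure E) [μ.IsAddHaarMeasure]

lemma measure_ball_scale (x y : E) {c u : ℝ} (hc : 0 < c) (hu : 0 < u) :
    μ (ball x (c * u)) = ENNReal.ofReal (c ^ finrank ℝ E) * μ (ball y u) := by
  rw [Measure.addHaar_ball_of_pos μ _ (mul_pos hc hu), Measure.addHaar_ball_of_pos μ _ hu, mul_pow,
    ENNReal.ofReal_mul (by positivity), mul_assoc]

lemma measureReal_ball_scale (x y : E) {c u : ℝ} (hc : 0 < c) (hu : 0 < u) :
    μ.real (ball x (c * u)) = c ^ finrank ℝ E * μ.real (ball y u) := by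
  rw [measureReal_def, measure_ball_scale μ x y hc hu, ENNReal.toReal_mul,
    ENNReal.toReal_ofReal (by positivity), measureReal_def]

lemma closedBall_ae_eq_ball [Nontrivial E] (x : E) (u : ℝ) :
    closedBall x u =ᵐ[μ] ball x u :=
  (ae_le_set.2 (by rw [closedBall_sdiff_ball]; exact Measure.addHaar_sphere μ x u)).antisymm
    ball_subset_closedBall.eventuallyLE

lemma ae_tendsto_setAverage_ball_abs_sub [Nontrivial E] {f : E → ℝ}
    (hf : LocallyIntegrable f μ) :
    ∀ᵐ y ∂μ, Tendsto (fun t => ⨍ w in ball y t, |f w - f y| ∂μ) (𝓝[>] 0) (𝓝 0) := by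
  filter_upwards [IsUnifLocDoublingMeasure.ae_tendsto_average_norm_sub μ hf 1] with y hy
  have hclosed := hy (fun _ => y) id tendsto_id
    (eventually_mem_nhdsWithin.mono fun t ht => mem_closedBall_self (by simpa using ht.le))
  simpa only [setAverage_congr (closedBall_ae_eq_ball μ y _), Real.norm_eq_abs, id] using hclosed

end HaarBalls

/-- The condition `u + dist y x₀ ≤ R` stands for `B(y, u) ⊆ B(x₀, R)`. -/
def MeanOscillationLE {E : Type*} [PseudoMetricSpace E] [MeasurableSpace E] (μ : Measure E)
    (f : E → ℝ) (x₀ : E) (R A : ℝ) : Prop :=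
  ∀ y u, 0 < u → u + dist y x₀ ≤ R →
    ∫ x in ball y u, |f x - ⨍ w in ball y u, f w ∂μ| ∂μ ≤ A * μ.real (ball y u)

def johnNirenbergConst (d : ℕ) : ℝ := 2 * 20 ^ d * (2 ^ d + 4 ^ d)

lemma johnNirenbergConst_pos (d : ℕ) : 0 < johnNirenbergConst d := by
  unfold johnNirenbergConst; positivity

lemma twenty_pow_mul_le_johnNirenbergConst_mul (d : ℕ) {A : ℝ} (hA : 0 ≤ A) :
    20 ^ d * ((2 ^ d + 4 ^ d) * A) ≤ johnNirenbergConst d * A :=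
  calc 20 ^ d * ((2 ^ d + 4 ^ d) * A) ≤ 2 * (20 ^ d * ((2 ^ d + 4 ^ d) * A)) :=
        le_mul_of_one_le_left (by positivity) one_le_two
    _ = johnNirenbergConst d * A := by unfold johnNirenbergConst; ring

lemma five_pow_mul_le_johnNirenbergConst_mul (d : ℕ) {A V : ℝ} (hA : 0 ≤ A) (hV : 0 ≤ V) :
    5 ^ d * ((2 ^ d + 4 ^ d) * A * V) ≤ johnNirenbergConst d * A * (2⁻¹ * V) :=
  calc 5 ^ d * ((2 ^ d + 4 ^ d) * A * V) ≤ 20 ^ d * ((2 ^ d + 4 ^ d) * A * V) := by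
        gcongr; norm_num
    _ = johnNirenbergConst d * A * (2⁻¹ * V) := by unfold johnNirenbergConst; ring

section HaarOscillation

variable {E : Type*} [NormedAddCommGroup E] [NormedSpace ℝ E] [FiniteDimensional ℝ E]
  [MeasurableSpace E] [BorelSpace E] {μ : Measure E} [μ.IsAddHaarMeasure]
  {f : E → ℝ} {x₀ : E} {R A : ℝ}

lemma setIntegral_ball_two_mul_abs_sub_setAverage_le (hf : LocallyIntegrable f μ)
    (hosc : MeanOscillationLE μ f x₀ R A) {z : E} {s : ℝ} (hs : 0 < s)
    (hz : 2 * s + dist z x₀ ≤ R) :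
    ∫ x in ball z (2 * s), |f x - ⨍ w in ball z s, f w ∂μ| ∂μ ≤
      (2 ^ finrank ℝ E + 4 ^ finrank ℝ E) * A * μ.real (ball z s) := by
  set d := finrank ℝ E
  set m := ⨍ w in ball z s, f w ∂μ
  set m₂ := ⨍ w in ball z (2 * s), f w ∂μ
  have hvol : μ.real (ball z (2 * s)) = 2 ^ d * μ.real (ball z s) :=
    measureReal_ball_scale μ z z two_pos hs
  have hosc₂ := hosc z (2 * s) (by positivity) hz
  have hm : |m₂ - m| ≤ 2 ^ d * A := by
    refine le_of_mul_le_mul_left ?_ (measureReal_ball_pos (μ := μ) z hs)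
    calc μ.real (ball z s) * |m₂ - m| = μ.real (ball z s) * |m - m₂| := by rw [abs_sub_comm]
      _ ≤ ∫ x in ball z s, |f x - m₂| ∂μ :=
          mul_abs_setAverage_sub_le (hf.integrableOn_ball z s) measure_ball_lt_top.ne m₂
      _ ≤ ∫ x in ball z (2 * s), |f x - m₂| ∂μ :=
          setIntegral_mono_set ((hf.integrableOn_ball z _).sub
            (integrableOn_const measure_ball_lt_top.ne)).abs
            (Eventually.of_forall fun x => abs_nonneg _)
            (ball_subset_ball (by linarith)).eventuallyLE
      _ ≤ A * μ.real (ball z (2 * s)) := hosc₂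
      _ = μ.real (ball z s) * (2 ^ d * A) := by rw [hvol]; ring
  calc ∫ x in ball z (2 * s), |f x - m| ∂μ
      ≤ (∫ x in ball z (2 * s), |f x - m₂| ∂μ) + |m₂ - m| * μ.real (ball z (2 * s)) :=
        setIntegral_abs_sub_le_add (hf.integrableOn_ball z _) measure_ball_lt_top.ne m m₂
    _ ≤ A * μ.real (ball z (2 * s)) + 2 ^ d * A * μ.real (ball z (2 * s)) := by gcongr
    _ = (2 ^ d + 4 ^ d) * A * μ.real (ball z s) := by
        rw [hvol, show (4 : ℝ) ^ d = 2 ^ d * 2 ^ d by rw [← mul_pow]; norm_num]; ring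

lemma setIntegral_ball_abs_sub_setAverage_le (hf : LocallyIntegrable f μ)
    (hosc : MeanOscillationLE μ f x₀ R A) {z : E} {s : ℝ} (hs : 0 < s)
    (hz : 2 * s + dist z x₀ ≤ R) {y : E} (hy : y ∈ ball z s) {u : ℝ} (hu : 0 < u) (hus : u ≤ s) :
    ∫ x in ball y u, |f x - ⨍ w in ball z s, f w ∂μ| ∂μ ≤
      (s / u) ^ finrank ℝ E * ((2 ^ finrank ℝ E + 4 ^ finrank ℝ E) * A) * μ.real (ball y u) := by
  have hsub : ball y u ⊆ ball z (2 * s) := ball_subset_ball' (by linarith [mem_ball.1 hy])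
  calc ∫ x in ball y u, |f x - ⨍ w in ball z s, f w ∂μ| ∂μ
      ≤ ∫ x in ball z (2 * s), |f x - ⨍ w in ball z s, f w ∂μ| ∂μ :=
        setIntegral_mono_set ((hf.integrableOn_ball z _).sub
          (integrableOn_const measure_ball_lt_top.ne)).abs
          (Eventually.of_forall fun x => abs_nonneg _) hsub.eventuallyLE
    _ ≤ (2 ^ finrank ℝ E + 4 ^ finrank ℝ E) * A * μ.real (ball z s) :=
        setIntegral_ball_two_mul_abs_sub_setAverage_le hf hosc hs hz
    _ = _ := by
        rw [← div_mul_cancel₀ s hu.ne', measureReal_ball_scale μ z y (div_pos hs hu) hu,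
          div_mul_cancel₀ s hu.ne']
        ring

lemma exists_stopping_radius (hf : LocallyIntegrable f μ) (hA : 0 ≤ A)
    (hosc : MeanOscillationLE μ f x₀ R A) {z : E} {s : ℝ} (hs : 0 < s)
    (hz : 2 * s + dist z x₀ ≤ R) {y : E} (hy : y ∈ ball z s) {L : ℝ}
    (hL : 20 ^ finrank ℝ E * ((2 ^ finrank ℝ E + 4 ^ finrank ℝ E) * A) ≤ L)
    (hleb : Tendsto (fun t => ⨍ w in ball y t, |f w - f y| ∂μ) (𝓝[>] 0) (𝓝 0))
    (hfy : L < |f y - ⨍ w in ball z s, f w ∂μ|) :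
    ∃ t ∈ Ioc 0 (s / 20),
      L * μ.real (ball y t) < ∫ x in ball y t, |f x - ⨍ w in ball z s, f w ∂μ| ∂μ ∧
      ∫ x in ball y (5 * t), |f x - ⨍ w in ball z s, f w ∂μ| ∂μ ≤ L * μ.real (ball y (5 * t)) := by
  obtain ⟨t, ht, hlarge, hnext⟩ := exists_mem_Ioc_and_not_of_eventually
    (eventually_mul_measureReal_lt_setIntegral hf hleb hfy) (a := s / 20) (by positivity)
    (by norm_num : (1 : ℝ) < 5)
  refine ⟨t, ht, hlarge, ?_⟩
  by_cases h5 : 5 * t ≤ s / 20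
  · exact not_lt.1 (hnext h5)
  have ht0 : 0 < t := ht.1
  have hratio : s / (5 * t) ≤ 20 := by
    rw [div_le_iff₀ (by positivity)]; linarith
  calc _ ≤ (s / (5 * t)) ^ finrank ℝ E * ((2 ^ finrank ℝ E + 4 ^ finrank ℝ E) * A) *
        μ.real (ball y (5 * t)) :=
        setIntegral_ball_abs_sub_setAverage_le hf hosc hs hz hy (by positivity)
          (by linarith [ht.2])
    _ ≤ L * μ.real (ball y (5 * t)) := by gcongr; exact le_trans (by gcongr) hL

lemma tsum_measure_ball_le (hf : LocallyIntegrable f μ) (hA : 0 < A)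
    (hosc : MeanOscillationLE μ f x₀ R A) {z : E} {s : ℝ} (hs : 0 < s)
    (hz : 2 * s + dist z x₀ ≤ R) {u : Set E} (hu : u.Countable) {r : E → ℝ}
    (hdisj : u.PairwiseDisjoint fun b => ball b (r b)) (hr : ∀ b ∈ u, b ∈ ball z s ∧ r b ≤ s)
    (hlarge : ∀ b ∈ u, johnNirenbergConst (finrank ℝ E) * A * μ.real (ball b (r b)) <
      ∫ x in ball b (r b), |f x - ⨍ w in ball z s, f w ∂μ| ∂μ) :
    ENNReal.ofReal (5 ^ finrank ℝ E) * ∑' b : u, μ (ball (b : E) (r b)) ≤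
      2⁻¹ * μ (ball z s) := by
  set d := finrank ℝ E
  set L := johnNirenbergConst d * A
  set m := ⨍ w in ball z s, f w ∂μ
  have hL : 0 < L := mul_pos (johnNirenbergConst_pos d) hA
  have : Countable u := hu.to_subtype
  have hlint : ∀ c : E, ∀ v : ℝ, ∫⁻ x in ball c v, ENNReal.ofReal |f x - m| ∂μ =
      ENNReal.ofReal (∫ x in ball c v, |f x - m| ∂μ) := fun c v =>
    (ofReal_integral_eq_lintegral_ofReal ((hf.integrableOn_ball c v).sub
      (integrableOn_const measure_ball_lt_top.ne)).abs
      (Eventually.of_forall fun _ => abs_nonneg _)).symm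
  have hsum : ENNReal.ofReal L * ∑' b : u, μ (ball (b : E) (r b)) ≤
      ENNReal.ofReal ((2 ^ d + 4 ^ d) * A * μ.real (ball z s)) := by
    refine (tsum_mul_measure_le_setLIntegral (B := fun b : u => ball (b : E) (r b))
      (fun _ => measurableSet_ball) (fun b c hbc => hdisj b.2 c.2 (Subtype.coe_injective.ne hbc))
      (fun b => ball_subset_ball' (by linarith [(hr b b.2).2, mem_ball.1 (hr b b.2).1]))
      (S := ball z (2 * s)) (g := fun x => ENNReal.ofReal |f x - m|) fun b => ?_).trans ?_
    · rw [← ENNReal.ofReal_toReal (measure_ball_lt_top (μ := μ)).ne, ← ENNReal.ofReal_mul hL.le,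
        hlint]
      exact ENNReal.ofReal_le_ofReal (hlarge b b.2).le
    · rw [hlint]
      exact ENNReal.ofReal_le_ofReal (setIntegral_ball_two_mul_abs_sub_setAverage_le hf hosc hs hz)
  rw [← ENNReal.mul_le_mul_iff_right (ENNReal.ofReal_pos.2 hL).ne' ENNReal.ofReal_ne_top,
    mul_left_comm]
  calc ENNReal.ofReal (5 ^ d) * (ENNReal.ofReal L * ∑' b : u, μ (ball (b : E) (r b)))
      ≤ ENNReal.ofReal (5 ^ d * ((2 ^ d + 4 ^ d) * A * μ.real (ball z s))) := by
        rw [ENNReal.ofReal_mul (p := 5 ^ d) (by positivity)]; exact mul_le_mul_right hsum _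
    _ ≤ ENNReal.ofReal (L * (2⁻¹ * μ.real (ball z s))) :=
        ENNReal.ofReal_le_ofReal (five_pow_mul_le_johnNirenbergConst_mul d hA.le measureReal_nonneg)
    _ = ENNReal.ofReal L * (2⁻¹ * μ (ball z s)) := by
        rw [ENNReal.ofReal_mul hL.le, ENNReal.ofReal_mul (p := 2⁻¹) (by norm_num),
          ENNReal.ofReal_inv_of_pos two_pos, ENNReal.ofReal_ofNat, measureReal_def,
          ENNReal.ofReal_toReal measure_ball_lt_top.ne]

lemma measure_lt_abs_sub_setAverage_succ_le [Nontrivial E] (hf : LocallyIntegrable f μ)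
    (hA : 0 < A) (hosc : MeanOscillationLE μ f x₀ R A) {k : ℕ}
    (ih : ∀ (z : E) (s : ℝ), 0 < s → 3 * s + dist z x₀ ≤ R →
      μ {x ∈ ball z s | k * (johnNirenbergConst (finrank ℝ E) * A) <
        |f x - ⨍ w in ball z s, f w ∂μ|} ≤ 2⁻¹ ^ k * μ (ball z s))
    {z : E} {s : ℝ} (hs : 0 < s) (hz : 3 * s + dist z x₀ ≤ R) :
    μ {x ∈ ball z s | ((k + 1 : ℕ) : ℝ) * (johnNirenbergConst (finrank ℝ E) * A) <
      |f x - ⨍ w in ball z s, f w ∂μ|} ≤ 2⁻¹ ^ (k + 1) * μ (ball z s) := by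
  set d := finrank ℝ E
  set L := johnNirenbergConst d * A
  set S := {x ∈ ball z s | ((k + 1 : ℕ) : ℝ) * L < |f x - ⨍ w in ball z s, f w ∂μ|}
  set G := {y ∈ S | Tendsto (fun t => ⨍ w in ball y t, |f w - f y| ∂μ) (𝓝[>] 0) (𝓝 0)}
  have hL : 0 < L := mul_pos (johnNirenbergConst_pos d) hA
  have hstop : ∀ y ∈ G, ∃ t ∈ Ioc 0 (s / 20),
      L * μ.real (ball y t) < ∫ x in ball y t, |f x - ⨍ w in ball z s, f w ∂μ| ∂μ ∧
      ∫ x in ball y (5 * t), |f x - ⨍ w in ball z s, f w ∂μ| ∂μ ≤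
        L * μ.real (ball y (5 * t)) := fun y hy =>
    exists_stopping_radius hf hA.le hosc hs (by linarith) hy.1.1
      (twenty_pow_mul_le_johnNirenbergConst_mul d hA.le) hy.2
      ((le_mul_of_one_le_left hL.le (by simp)).trans_lt hy.1.2)
  choose! r hr using hstop
  obtain ⟨u, huG, hu, hdisj, hcover⟩ :=
    exists_countable_pairwiseDisjoint_ball_cover G r fun y hy => (hr y hy).1
  have : Countable u := hu.to_subtype
  calc μ S ≤ μ (⋃ b ∈ u, S ∩ ball b (5 * r b)) := measure_mono_ae <| by
        filter_upwards [ae_tendsto_setAverage_ball_abs_sub μ hf] with y hleb hyS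
        obtain ⟨b, hb, hyb⟩ := mem_iUnion₂.1 (hcover ⟨hyS, hleb⟩)
        exact mem_iUnion₂.2 ⟨b, hb, hyS, hyb⟩
    _ ≤ ∑' b : u, μ (S ∩ ball b (5 * r b)) := measure_biUnion_le μ hu _
    _ ≤ ∑' b : u, 2⁻¹ ^ k * (ENNReal.ofReal (5 ^ d) * μ (ball (b : E) (r b))) :=
        ENNReal.tsum_le_tsum fun b => by
          rw [← measure_ball_scale μ _ _ (by norm_num) (hr b (huG b.2)).1.1]
          exact measure_inter_ball_le_of_stopping hf ih hz (huG b.2).1.1 (hr b (huG b.2)).1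
            (hr b (huG b.2)).2.2
    _ = 2⁻¹ ^ k * (ENNReal.ofReal (5 ^ d) * ∑' b : u, μ (ball (b : E) (r b))) := by
        rw [ENNReal.tsum_mul_left, ENNReal.tsum_mul_left]
    _ ≤ 2⁻¹ ^ k * (2⁻¹ * μ (ball z s)) :=
        mul_le_mul_right (tsum_measure_ball_le hf hA hosc hs (by linarith) hu hdisj
          (fun b hb => ⟨(huG hb).1.1, by linarith [(hr b (huG hb)).1.2]⟩)
          fun b hb => (hr b (huG hb)).2.1) _
    _ = 2⁻¹ ^ (k + 1) * μ (ball z s) := by rw [pow_succ, mul_assoc]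

theorem measure_lt_abs_sub_setAverage_le [Nontrivial E] (hf : LocallyIntegrable f μ)
    (hA : 0 < A) (hosc : MeanOscillationLE μ f x₀ R A) (k : ℕ) :
    ∀ (z : E) (s : ℝ), 0 < s → 3 * s + dist z x₀ ≤ R →
      μ {x ∈ ball z s | k * (johnNirenbergConst (finrank ℝ E) * A) <
        |f x - ⨍ w in ball z s, f w ∂μ|} ≤ 2⁻¹ ^ k * μ (ball z s) := by
  induction k with
  | zero => exact fun z s _ _ => by rw [pow_zero, one_mul]; exact measure_mono (sep_subset _ _)
  | succ k ih => exact fun z s hs hz => measure_lt_abs_sub_setAverage_succ_le hf hA hosc ih hs hz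

theorem setLIntegral_exp_abs_sub_setAverage_le [Nontrivial E] (hf : LocallyIntegrable f μ)
    (hA : 0 < A) {r : ℝ} (hr : 0 < r) (hosc : MeanOscillationLE μ f x₀ (3 * r) A) :
    ∫⁻ x in ball x₀ r, ENNReal.ofReal (Real.exp (Real.log (3 / 2) *
        |f x - ⨍ w in ball x₀ r, f w ∂μ| / (johnNirenbergConst (finrank ℝ E) * A))) ∂μ ≤
      12 * μ (ball x₀ r) :=
  setLIntegral_exp_le_of_measure_lt_le (mul_pos (johnNirenbergConst_pos _) hA)
    (fun _ _ => abs_nonneg _)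
    fun k => measure_lt_abs_sub_setAverage_le hf hA hosc k x₀ r hr (by rw [dist_self, add_zero])

end HaarOscillation

end JohnNirenberg

open JohnNirenberg

namespace Schrodinger

variable {n : ℕ} {ρ : Euc n → ℝ} {C₀ l₀ : ℝ}

lemma IsCriticalRadius.one_add_div_le (hρ : IsCriticalRadius ρ C₀ l₀) {x₀ y : Euc n} {u R : ℝ}
    (hu : 0 ≤ u) (h : u + dist y x₀ ≤ R) :
    1 + u / ρ y ≤ (1 + C₀) * (1 + R / ρ x₀) ^ (l₀ + 1) := by
  obtain ⟨hC₀, hl₀, hpos, hcmp⟩ := hρ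
  have hC₀' : 0 < C₀ := by linarith
  have hρ₀ := hpos x₀
  set a := 1 + dist x₀ y / ρ x₀
  set b := 1 + R / ρ x₀
  have ha : 1 ≤ a := le_add_of_nonneg_right (by positivity)
  have hab : a ≤ b := by
    show 1 + dist x₀ y / ρ x₀ ≤ 1 + R / ρ x₀
    gcongr; rw [dist_comm]; linarith
  have hb0 : 0 < b := by linarith
  have hub : u / ρ x₀ ≤ b := by
    have : u / ρ x₀ ≤ R / ρ x₀ := by gcongr; linarith [dist_nonneg (x := y) (y := x₀)]
    linarith
  have hlow : ρ x₀ / (C₀ * a ^ l₀) ≤ ρ y := by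
    have := (hcmp x₀ y).1
    rwa [Real.rpow_neg (by positivity), ← div_eq_mul_inv, inv_mul_eq_div, div_div] at this
  have hdiv : u / ρ y ≤ C₀ * b ^ (l₀ + 1) :=
    calc u / ρ y ≤ u / (ρ x₀ / (C₀ * a ^ l₀)) := div_le_div_of_nonneg_left hu (by positivity) hlow
      _ = C₀ * (u / ρ x₀) * a ^ l₀ := by field_simp
      _ ≤ C₀ * b * b ^ l₀ := by gcongr
      _ = C₀ * b ^ (l₀ + 1) := by rw [Real.rpow_add_one hb0.ne']; ring
  have hb : 1 ≤ b ^ (l₀ + 1) := Real.one_le_rpow (ha.trans hab) (by positivity)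
  linarith

lemma IsCriticalRadius.psi_le (hρ : IsCriticalRadius ρ C₀ l₀) {θ : ℝ} (hθ : 0 ≤ θ)
    {x₀ y : Euc n} {u r : ℝ} (hu : 0 ≤ u) (h : u + dist y x₀ ≤ 3 * r) :
    psi ρ θ y u ≤ (3 ^ (l₀ + 1) * (1 + C₀)) ^ θ * psi ρ ((l₀ + 1) * θ) x₀ r := by
  have hρ₀ := hρ.2.2.1 x₀
  have hρy := hρ.2.2.1 y
  have hl₀ := hρ.2.1
  have hC₀ : 0 < 1 + C₀ := by linarith [hρ.1]
  have hr : 0 ≤ r := by linarith [dist_nonneg (x := y) (y := x₀)]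
  have h3 : 1 + 3 * r / ρ x₀ ≤ 3 * (1 + r / ρ x₀) := by
    rw [mul_div_assoc]; linarith
  unfold psi
  calc (1 + u / ρ y) ^ θ ≤ ((1 + C₀) * (1 + 3 * r / ρ x₀) ^ (l₀ + 1)) ^ θ := by
        gcongr; exact hρ.one_add_div_le hu h
    _ ≤ ((1 + C₀) * (3 * (1 + r / ρ x₀)) ^ (l₀ + 1)) ^ θ := by gcongr
    _ = (3 ^ (l₀ + 1) * (1 + C₀) * (1 + r / ρ x₀) ^ (l₀ + 1)) ^ θ := by
        rw [Real.mul_rpow (x := 3) (y := 1 + r / ρ x₀) (by norm_num) (by positivity)]; ring_nf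
    _ = (3 ^ (l₀ + 1) * (1 + C₀)) ^ θ * (1 + r / ρ x₀) ^ ((l₀ + 1) * θ) := by
        rw [Real.mul_rpow (by positivity) (by positivity), Real.rpow_mul (by positivity)]

lemma ballAvg_eq_setAverage (f : Euc n → ℝ) (x : Euc n) (r : ℝ) :
    ballAvg f x r = ⨍ y in ball x r, f y := by
  rw [ballAvg, setAverage_eq, smul_eq_mul, measureReal_def]

lemma meanOscillationLE_of_bmo (hρ : IsCriticalRadius ρ C₀ l₀) {θ : ℝ} (hθ : 0 ≤ θ)
    {f : Euc n → ℝ} {M : ℝ} (hM : 0 ≤ M)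
    (hf : ∀ (x : Euc n) (r : ℝ), 0 < r →
      (1 + r / ρ x) ^ (-θ) * ((volume (ball x r)).toReal⁻¹ *
        ∫ y in ball x r, |f y - ballAvg f x r|) ≤ M)
    (x₀ : Euc n) (r : ℝ) :
    MeanOscillationLE volume f x₀ (3 * r)
      ((3 ^ (l₀ + 1) * (1 + C₀)) ^ θ * M * psi ρ ((l₀ + 1) * θ) x₀ r) := by
  intro y u hu h
  have hV := measureReal_ball_pos (μ := volume) y hu
  have hψ : 0 < psi ρ θ y u := Real.rpow_pos_of_pos (by have := hρ.2.2.1 y; positivity) _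
  have hfy := hf y u hu
  rw [Real.rpow_neg (by have := hρ.2.2.1 y; positivity), ← measureReal_def,
    ballAvg_eq_setAverage] at hfy
  calc ∫ x in ball y u, |f x - ⨍ w in ball y u, f w| =
        psi ρ θ y u * volume.real (ball y u) * ((psi ρ θ y u)⁻¹ * ((volume.real (ball y u))⁻¹ *
          ∫ x in ball y u, |f x - ⨍ w in ball y u, f w|)) := by field_simp
    _ ≤ psi ρ θ y u * volume.real (ball y u) * M := by gcongr; exact hfy
    _ ≤ (3 ^ (l₀ + 1) * (1 + C₀)) ^ θ * psi ρ ((l₀ + 1) * θ) x₀ r * volume.real (ball y u) * M := by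
        gcongr; exact hρ.psi_le hθ hu.le h
    _ = _ := by ring

end Schrodinger

/-- Proposition 4.3, exponential integrability for `BMO_θ(ρ)`. -/
theorem stmt15 (n : ℕ) (hn : 0 < n) (ρ : Euc n → ℝ) (C₀ l₀ : ℝ)
    (hρ : IsCriticalRadius ρ C₀ l₀) (θ : ℝ) (hθ : 0 < θ)
    (f : Euc n → ℝ) (M : ℝ) (hM : 0 ≤ M) (hfloc : LocallyIntegrable f volume)
    (hf : ∀ (x : Euc n) (r : ℝ), 0 < r →
      (1 + r / ρ x) ^ (-θ) * ((volume (Metric.ball x r)).toReal⁻¹ *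
        ∫ y in Metric.ball x r, |f y - ballAvg f x r|) ≤ M) :
    ∃ γ C : ℝ, 0 < γ ∧ 0 < C ∧ ∀ (x₀ : Euc n) (r : ℝ), 0 < r →
      (volume (Metric.ball x₀ r))⁻¹ *
          ∫⁻ x in Metric.ball x₀ r,
            ENNReal.ofReal (Real.exp (γ * |f x - ballAvg f x₀ r| /
              (M * (1 + r / ρ x₀) ^ ((l₀ + 1) * θ)))) ≤
        ENNReal.ofReal C := by
  have : Nonempty (Fin n) := ⟨⟨0, hn⟩⟩
  have hC₀ : 0 < 1 + C₀ := by linarith [hρ.1]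
  have hK := johnNirenbergConst_pos (finrank ℝ (Euc n))
  refine ⟨Real.log (3 / 2) / (johnNirenbergConst (finrank ℝ (Euc n)) *
    (3 ^ (l₀ + 1) * (1 + C₀)) ^ θ), 12, div_pos (Real.log_pos (by norm_num)) (by positivity),
    by norm_num, fun x₀ r hr => ?_⟩
  rw [ENNReal.inv_mul_le_iff (measure_ball_pos volume x₀ hr).ne' measure_ball_lt_top.ne,
    ENNReal.ofReal_ofNat, mul_comm (volume _)]
  rcases hM.eq_or_lt with rfl | hMpos
  -- For `M = 0` the exponent is a division by zero, so the integrand is `exp 0 = 1`.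
  · simpa using le_mul_of_one_le_left' (by norm_num : (1 : ℝ≥0∞) ≤ 12)
  have hψ : 0 < psi ρ ((l₀ + 1) * θ) x₀ r :=
    Real.rpow_pos_of_pos (by have := hρ.2.2.1 x₀; positivity) _
  convert setLIntegral_exp_abs_sub_setAverage_le hfloc (by positivity) hr
    (meanOscillationLE_of_bmo hρ hθ.le hM hf x₀ r) using 5 with x
  rw [ballAvg_eq_setAverage, psi]
  field_simp
end
end

section
/- Let ρ be a critical radius function on ℝ^n, θ ≥ 0, 0 ≤ β < n, 0 < η < ∞, and let f be such that M_{V,η} f and M_{β,V,η} f are locally integrable. Then there is a constant C > 0, independent of f and x, such that for all x ∈ ℝ^n: M_{V,η+1}( M_{β,V,η} f )(x) ≤ C M_{β,V,η}( M_{V,η} f )(x). -/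
open MeasureTheory Metric Set
open scoped ENNReal

noncomputable section

/-!
Fix a cube `Q = Q(x₀, r)` containing `x` and a point `y ∈ Q`, and split the cubes `R ∋ y` in
`M_{β,V,η} f(y)` by size. If `R` has side `s ≥ r`, then `x ∈ 3R`; since `∫_R |f| ≲ ∫_{3R} M_{V,η} f`
(average `|f|` over cubes so small that `Ψ ≤ 2^θ` on them and apply Tonelli) and the coefficient of
`R` is at most a constant times that of `3R`, such `R` contribute `≲ M_{β,V,η}(M_{V,η} f)(x)`.
If `s ≤ r`, then `R ⊆ 3Q` and `R` lies in the cube of side `2^{1-k} r` centred at `y`, where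
`2^{-k-1} r < s ≤ 2^{-k} r`; integrating over `Q` and summing the geometric series in `k` (here
`β > 0` is needed) bounds the contribution of these cubes by `r^β ∫_{3Q} |f|`, and
`Ψ(Q)^{-η-2} r^{β-n} ≲` the coefficient of `3Q`, so the same argument finishes. For `β = 0` the
claim is just the monotonicity of `M_{V,η}` in `η`.
-/

namespace Schrodinger

variable {n : ℕ}

section Cube

variable {x y z : Euc n} {r s : ℝ}

lemma mem_cube_comm : y ∈ cube x r ↔ x ∈ cube y r := by
  simp only [cube, mem_ofPred_eq, abs_sub_comm]

lemma center_mem_cube (hr : 0 ≤ r) : x ∈ cube x r := fun i => by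
  rw [sub_self, abs_zero]; linarith

lemma cube_mono (h : r ≤ s) : cube x r ⊆ cube x s :=
  fun _ hy i => (hy i).trans (by linarith)

lemma cube_subset_cube_add (hy : y ∈ cube x r) : cube y s ⊆ cube x (r + s) := fun w hw i => by
  linarith [abs_sub_le (w i) (y i) (x i), hw i, hy i]

lemma cube_eq_preimage (x : Euc n) (r : ℝ) :
    cube x r = WithLp.ofLp ⁻¹' univ.pi fun i => Icc (x i - r / 2) (x i + r / 2) := by
  ext y
  simp only [cube, mem_ofPred_eq, mem_preimage, mem_univ_pi, mem_Icc, abs_le]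
  exact forall_congr' fun i => by constructor <;> rintro ⟨h₁, h₂⟩ <;> constructor <;> linarith

lemma measurableSet_cube (x : Euc n) (r : ℝ) : MeasurableSet (cube x r) := by
  rw [cube_eq_preimage]
  exact (MeasurableSet.univ_pi fun _ => measurableSet_Icc).preimage (WithLp.measurable_ofLp 2 _)

lemma isBounded_cube (x : Euc n) (r : ℝ) : Bornology.IsBounded (cube x r) := by
  rw [cube_eq_preimage, pi_univ_Icc]
  exact (PiLp.antilipschitzWith_ofLp 2 _).isBounded_preimage (isBounded_Icc _ _)

lemma volume_cube (x : Euc n) (hr : 0 ≤ r) : volume (cube x r) = ENNReal.ofReal (r ^ n) := by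
  rw [cube_eq_preimage, (PiLp.volume_preserving_ofLp (Fin n)).measure_preimage
    (MeasurableSet.univ_pi fun _ => measurableSet_Icc).nullMeasurableSet, volume_pi_pi]
  simp only [Real.volume_Icc, add_sub_sub_cancel, add_halves, Finset.prod_const,
    Finset.card_univ, Fintype.card_fin, ENNReal.ofReal_pow hr]

lemma measurableSet_setOf_mem_cube (r : ℝ) :
    MeasurableSet {p : Euc n × Euc n | p.2 ∈ cube p.1 r} := by
  refine IsClosed.measurableSet ?_
  have : {p : Euc n × Euc n | p.2 ∈ cube p.1 r} = ⋂ i, {p | |p.2 i - p.1 i| ≤ r / 2} := by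
    ext p; simp [cube]
  rw [this]
  exact isClosed_iInter fun i => isClosed_le (by fun_prop) continuous_const

end Cube

lemma IsCriticalRadius.pos_s17 {ρ : Euc n → ℝ} {C₀ l₀ : ℝ} (hρ : IsCriticalRadius ρ C₀ l₀) (x : Euc n) :
    0 < ρ x :=
  hρ.2.2.1 x

lemma IsCriticalRadius.exists_pos_le_of_isBounded {ρ : Euc n → ℝ} {C₀ l₀ : ℝ}
    (hρ : IsCriticalRadius ρ C₀ l₀) {S : Set (Euc n)} (hS : Bornology.IsBounded S) :
    ∃ m, 0 < m ∧ ∀ z ∈ S, m ≤ ρ z := by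
  obtain ⟨hC₀, hl₀, hpos, hcomp⟩ := hρ
  obtain ⟨R, hR, hSR⟩ := hS.subset_closedBall_lt 0 0
  have hρ0 := hpos 0
  have hC₀' : 0 < C₀ := by linarith
  refine ⟨C₀⁻¹ * ρ 0 * (1 + R / ρ 0) ^ (-l₀), by positivity, fun z hz => ?_⟩
  refine le_trans (mul_le_mul_of_nonneg_left ?_ (by positivity)) (hcomp 0 z).1
  refine Real.rpow_le_rpow_of_nonpos (by positivity) ?_ (by linarith)
  gcongr
  simpa [dist_comm] using hSR hz

section Psi

variable {ρ : Euc n → ℝ} {θ : ℝ} {z : Euc n} {s : ℝ}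

lemma psi_pos_s17 (hρ : 0 < ρ z) (hs : 0 ≤ s) : 0 < psi ρ θ z s := by
  unfold psi; positivity

lemma one_le_psi_s17 (hρ : 0 < ρ z) (hθ : 0 ≤ θ) (hs : 0 ≤ s) : 1 ≤ psi ρ θ z s :=
  Real.one_le_rpow (le_add_of_nonneg_right (by positivity)) hθ

lemma psi_mul_le (hρ : 0 < ρ z) (hθ : 0 ≤ θ) (hs : 0 ≤ s) {c : ℝ} (hc : 1 ≤ c) :
    psi ρ θ z (c * s) ≤ c ^ θ * psi ρ θ z s := by
  unfold psi
  rw [← Real.mul_rpow (by linarith) (by positivity)]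
  gcongr
  rw [mul_add, mul_one, mul_div_assoc]
  linarith

lemma psi_le_two_rpow (hρ : 0 < ρ z) (hθ : 0 ≤ θ) (hs : 0 ≤ s) (hsρ : s ≤ ρ z) :
    psi ρ θ z s ≤ 2 ^ θ := by
  unfold psi
  gcongr
  linarith [(div_le_one hρ).2 hsρ]

end Psi

def maxCoef (ρ : Euc n → ℝ) (θ β η : ℝ) (z : Euc n) (s : ℝ) : ℝ :=
  psi ρ θ z s ^ (-η) * (psi ρ θ z s * s ^ n) ^ (β / (n : ℝ) - 1)

section MaxCoef

variable {ρ : Euc n → ℝ} {θ β η : ℝ} {z : Euc n} {s : ℝ}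

lemma maxCoef_pos (hρ : 0 < ρ z) (hs : 0 < s) : 0 < maxCoef ρ θ β η z s := by
  have := psi_pos_s17 (θ := θ) hρ hs.le
  unfold maxCoef; positivity

lemma maxCoef_eq (hn : 0 < n) (hρ : 0 < ρ z) (hs : 0 < s) :
    maxCoef ρ θ β η z s = psi ρ θ z s ^ (β / n - 1 - η) * s ^ (β - n) := by
  have hψ := psi_pos_s17 (θ := θ) hρ hs.le
  have hn' : (n : ℝ) ≠ 0 := by positivity
  rw [maxCoef, Real.mul_rpow hψ.le (by positivity), ← mul_assoc, ← Real.rpow_add hψ,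
    ← Real.rpow_natCast_mul hs.le, mul_sub, mul_div_cancel₀ _ hn', mul_one]
  ring_nf

lemma maxCoef_le_rpow (hn : 0 < n) (hρ : 0 < ρ z) (hθ : 0 ≤ θ) (hβn : β ≤ n) (hη : 0 ≤ η)
    (hs : 0 < s) : maxCoef ρ θ β η z s ≤ s ^ (β - n) := by
  have hβn' : β / n ≤ 1 := (div_le_one (by positivity)).2 hβn
  rw [maxCoef_eq hn hρ hs]
  exact mul_le_of_le_one_left (by positivity)
    (Real.rpow_le_one_of_one_le_of_nonpos (one_le_psi_s17 hρ hθ hs.le) (by linarith))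

lemma maxCoef_le_mul_maxCoef_mul (hn : 0 < n) (hρ : 0 < ρ z) (hθ : 0 ≤ θ) (hβ0 : 0 ≤ β)
    (hβn : β ≤ n) (hη : 0 ≤ η) (hs : 0 < s) {c : ℝ} (hc : 1 ≤ c) :
    maxCoef ρ θ β η z s ≤ c ^ (θ * (η + 1) + n) * maxCoef ρ θ β η z (c * s) := by
  have hc0 : 0 < c := by linarith
  have hψ := psi_pos_s17 (θ := θ) hρ hs.le
  have hβn' : 0 ≤ β / n := by positivity
  have he : β / n - 1 - η ≤ 0 := by linarith [(div_le_one (by positivity : (0 : ℝ) < n)).2 hβn]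
  have hψc : (c ^ θ * psi ρ θ z s) ^ (β / n - 1 - η) ≤ psi ρ θ z (c * s) ^ (β / n - 1 - η) :=
    Real.rpow_le_rpow_of_nonpos (psi_pos_s17 hρ (by positivity)) (psi_mul_le hρ hθ hs.le hc) he
  have hcexp : 1 ≤ c ^ (θ * (η + 1) + n) * c ^ (θ * (β / n - 1 - η)) * c ^ (β - n) := by
    rw [← Real.rpow_add hc0, ← Real.rpow_add hc0]
    exact Real.one_le_rpow hc (by nlinarith)
  rw [maxCoef_eq hn hρ hs, maxCoef_eq hn hρ (by positivity), Real.mul_rpow hc0.le hs.le]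
  calc psi ρ θ z s ^ (β / n - 1 - η) * s ^ (β - n)
      ≤ (c ^ (θ * (η + 1) + n) * c ^ (θ * (β / n - 1 - η)) * c ^ (β - n)) *
          (psi ρ θ z s ^ (β / n - 1 - η) * s ^ (β - n)) :=
        le_mul_of_one_le_left (by positivity) hcexp
    _ = c ^ (θ * (η + 1) + n) * ((c ^ θ * psi ρ θ z s) ^ (β / n - 1 - η) *
          (c ^ (β - n) * s ^ (β - n))) := by
        rw [Real.mul_rpow (by positivity) hψ.le, ← Real.rpow_mul hc0.le]; ring
    _ ≤ _ := by gcongr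

lemma maxCoef_zero_add_one_mul_rpow_le (hn : 0 < n) (hρ : 0 < ρ z) (hθ : 0 ≤ θ) (hβ0 : 0 ≤ β)
    (hs : 0 < s) : maxCoef ρ θ 0 (η + 1) z s * s ^ β ≤ maxCoef ρ θ β η z s := by
  rw [maxCoef_eq hn hρ hs, maxCoef_eq hn hρ hs, mul_assoc, ← Real.rpow_add hs, zero_div,
    show (0 : ℝ) - n + β = β - n by ring]
  have : 0 ≤ β / n := by positivity
  exact mul_le_mul_of_nonneg_right
    (Real.rpow_le_rpow_of_exponent_le (one_le_psi_s17 hρ hθ hs.le) (by linarith)) (by positivity)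

lemma inv_maxCoef_zero_le (hρ : 0 < ρ z) (hθ : 0 ≤ θ) (hη : -1 ≤ η) (hs : 0 < s)
    (hsρ : s ≤ ρ z) : (maxCoef ρ θ 0 η z s)⁻¹ ≤ 2 ^ (θ * (η + 1)) * s ^ n := by
  have hψ := psi_pos_s17 (θ := θ) hρ hs.le
  have : (maxCoef ρ θ 0 η z s)⁻¹ = psi ρ θ z s ^ (η + 1) * s ^ n := by
    rw [maxCoef, zero_div, zero_sub, Real.rpow_neg_one, Real.rpow_neg hψ.le,
      Real.rpow_add_one hψ.ne']
    field_simp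
  rw [this, Real.rpow_mul (by norm_num)]
  gcongr
  · linarith
  · exact psi_le_two_rpow hρ hθ hs.le hsρ

end MaxCoef

section Integrals

variable {g : Euc n → ℝ≥0∞}

lemma measurable_uncurry_indicator_cube (hg : Measurable g) (r : ℝ) :
    Measurable (Function.uncurry fun z w : Euc n => (cube z r).indicator g w) :=
  (hg.comp measurable_snd).indicator (measurableSet_setOf_mem_cube r)

lemma measurable_lintegral_cube (hg : Measurable g) (r : ℝ) :
    Measurable fun z : Euc n => ∫⁻ w in cube z r, g w := by
  simp_rw [← lintegral_indicator (measurableSet_cube _ r)]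
  exact (measurable_uncurry_indicator_cube hg r).lintegral_prod_right

lemma lintegral_lintegral_cube (hg : Measurable g) (A : Set (Euc n)) (r : ℝ) :
    ∫⁻ z in A, ∫⁻ w in cube z r, g w = ∫⁻ w, g w * volume (cube w r ∩ A) := by
  simp_rw [← lintegral_indicator (measurableSet_cube _ r)]
  rw [lintegral_lintegral_swap (measurable_uncurry_indicator_cube hg r).aemeasurable]
  refine lintegral_congr fun w => ?_
  have : ∀ z, (cube z r).indicator g w = (cube w r).indicator (fun _ => g w) z := fun z => by
    by_cases h : z ∈ cube w r
    · rw [indicator_of_mem (mem_cube_comm.1 h), indicator_of_mem h]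
    · rw [indicator_of_notMem (mt mem_cube_comm.2 h), indicator_of_notMem h]
  simp_rw [this]
  rw [lintegral_indicator_const (measurableSet_cube w r),
    Measure.restrict_apply (measurableSet_cube w r)]

end Integrals

section MaximalOperator

variable {ρ : Euc n → ℝ} {θ β η : ℝ} {g : Euc n → ℝ≥0∞} {x z : Euc n} {s : ℝ}

lemma le_eMaxB (hs : 0 < s) (hx : x ∈ cube z s) :
    ENNReal.ofReal (maxCoef ρ θ β η z s) * ∫⁻ y in cube z s, g y ≤ eMaxB ρ θ β η g x :=
  le_iSup_of_le z (le_iSup_of_le s (le_iSup_of_le ⟨hs, hx⟩ le_rfl))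

lemma eMaxB_le {t : ℝ≥0∞} (h : ∀ z s, 0 < s → x ∈ cube z s →
      ENNReal.ofReal (maxCoef ρ θ β η z s) * ∫⁻ y in cube z s, g y ≤ t) :
    eMaxB ρ θ β η g x ≤ t :=
  iSup_le fun z => iSup_le fun s => iSup_le fun hzs => h z s hzs.1 hzs.2

lemma eMaxB_le_eMaxB_of_le_eta (hρ : ∀ z, 0 < ρ z) (hθ : 0 ≤ θ) {η' : ℝ} (hη : η ≤ η') :
    eMaxB ρ θ β η' g x ≤ eMaxB ρ θ β η g x := by
  refine eMaxB_le fun z s hs hx => le_trans ?_ (le_eMaxB hs hx)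
  have hψ := psi_pos_s17 (θ := θ) (hρ z) hs.le
  gcongr
  exact mul_le_mul_of_nonneg_right
    (Real.rpow_le_rpow_of_exponent_le (one_le_psi_s17 (hρ z) hθ hs.le) (neg_le_neg hη))
    (by positivity)

lemma lintegral_cube_le_eMaxB (hρ : 0 < ρ z) (hs : 0 < s) (hx : x ∈ cube z s) :
    ∫⁻ y in cube z s, g y ≤ ENNReal.ofReal (maxCoef ρ θ β η z s)⁻¹ * eMaxB ρ θ β η g x := by
  have hc := maxCoef_pos (θ := θ) (β := β) (η := η) hρ hs
  calc ∫⁻ y in cube z s, g y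
      = ENNReal.ofReal (maxCoef ρ θ β η z s)⁻¹ *
          (ENNReal.ofReal (maxCoef ρ θ β η z s) * ∫⁻ y in cube z s, g y) := by
        rw [← mul_assoc, ← ENNReal.ofReal_mul (by positivity), inv_mul_cancel₀ hc.ne',
          ENNReal.ofReal_one, one_mul]
    _ ≤ _ := by gcongr; exact le_eMaxB hs hx

lemma lintegral_cube_le_lintegral_eMaxB (hθ : 0 ≤ θ) (hη : -1 ≤ η) (hg : Measurable g)
    {z₀ : Euc n} {t m : ℝ} (hst : s < t) (hm : 0 < m) (hρ : ∀ z ∈ cube z₀ t, m ≤ ρ z) :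
    ∫⁻ w in cube z₀ s, g w ≤
      ENNReal.ofReal (2 ^ (θ * (η + 1))) * ∫⁻ z in cube z₀ t, eMaxB ρ θ 0 η g z := by
  -- average `g` over cubes so small that they fit in `cube z₀ t` and `Ψ ≤ 2^θ` on them
  set ε := min (t - s) m
  have hε : 0 < ε := lt_min (by linarith) hm
  have hvol : ∀ w ∈ cube z₀ s, volume (cube w ε ∩ cube z₀ t) = ENNReal.ofReal (ε ^ n) :=
    fun w hw => by
      rw [inter_eq_self_of_subset_left ((cube_subset_cube_add hw).trans
        (cube_mono (by linarith [min_le_left (t - s) m]))), volume_cube w hε.le]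
  have hloc : ∀ z ∈ cube z₀ t, ∫⁻ w in cube z ε, g w ≤
      ENNReal.ofReal (2 ^ (θ * (η + 1)) * ε ^ n) * eMaxB ρ θ 0 η g z := fun z hz => by
    have hρz : 0 < ρ z := hm.trans_le (hρ z hz)
    refine (lintegral_cube_le_eMaxB (θ := θ) (β := 0) (η := η) hρz hε
      (center_mem_cube hε.le)).trans ?_
    gcongr
    exact inv_maxCoef_zero_le hρz hθ hη hε ((min_le_right _ _).trans (hρ z hz))
  refine (ENNReal.mul_le_mul_iff_right (a := ENNReal.ofReal (ε ^ n))
    (ENNReal.ofReal_pos.2 (by positivity)).ne' ENNReal.ofReal_ne_top).1 ?_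
  calc ENNReal.ofReal (ε ^ n) * ∫⁻ w in cube z₀ s, g w
      = ∫⁻ w in cube z₀ s, g w * volume (cube w ε ∩ cube z₀ t) := by
        rw [← lintegral_const_mul' _ _ ENNReal.ofReal_ne_top]
        exact setLIntegral_congr_fun (measurableSet_cube _ _) fun w hw => by
          rw [hvol w hw, mul_comm]
    _ ≤ ∫⁻ w, g w * volume (cube w ε ∩ cube z₀ t) := setLIntegral_le_lintegral _ _
    _ = ∫⁻ z in cube z₀ t, ∫⁻ w in cube z ε, g w := (lintegral_lintegral_cube hg _ _).symm
    _ ≤ ∫⁻ z in cube z₀ t, ENNReal.ofReal (2 ^ (θ * (η + 1)) * ε ^ n) * eMaxB ρ θ 0 η g z :=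
        setLIntegral_mono' (measurableSet_cube _ _) hloc
    _ = ENNReal.ofReal (ε ^ n) *
          (ENNReal.ofReal (2 ^ (θ * (η + 1))) * ∫⁻ z in cube z₀ t, eMaxB ρ θ 0 η g z) := by
        rw [lintegral_const_mul' _ _ ENNReal.ofReal_ne_top, ENNReal.ofReal_mul (by positivity)]
        ring

lemma ofReal_maxCoef_mul_lintegral_le_eMaxB_eMaxB {C₀ l₀ : ℝ} (hn : 0 < n)
    (hρ : IsCriticalRadius ρ C₀ l₀) (hθ : 0 ≤ θ) (hβ0 : 0 ≤ β) (hβn : β ≤ n) (hη : 0 ≤ η)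
    (hg : Measurable g) {c : ℝ} (hc : 1 < c) (hs : 0 < s) (hx : x ∈ cube z (c * s)) :
    ENNReal.ofReal (maxCoef ρ θ β η z s) * ∫⁻ w in cube z s, g w ≤
      ENNReal.ofReal (c ^ (θ * (η + 1) + n) * 2 ^ (θ * (η + 1))) *
        eMaxB ρ θ β η (eMaxB ρ θ 0 η g) x := by
  obtain ⟨m, hm, hmρ⟩ := hρ.exists_pos_le_of_isBounded (isBounded_cube z (c * s))
  calc ENNReal.ofReal (maxCoef ρ θ β η z s) * ∫⁻ w in cube z s, g w
      ≤ ENNReal.ofReal (c ^ (θ * (η + 1) + n) * maxCoef ρ θ β η z (c * s)) *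
          (ENNReal.ofReal (2 ^ (θ * (η + 1))) *
            ∫⁻ w in cube z (c * s), eMaxB ρ θ 0 η g w) := by
        gcongr ?_ * ?_
        · exact ENNReal.ofReal_le_ofReal <|
            maxCoef_le_mul_maxCoef_mul hn (hρ.pos_s17 z) hθ hβ0 hβn hη hs hc.le
        · exact lintegral_cube_le_lintegral_eMaxB hθ (by linarith) hg (by nlinarith) hm hmρ
    _ = ENNReal.ofReal (c ^ (θ * (η + 1) + n) * 2 ^ (θ * (η + 1))) *
          (ENNReal.ofReal (maxCoef ρ θ β η z (c * s)) *
            ∫⁻ w in cube z (c * s), eMaxB ρ θ 0 η g w) := by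
        have hc := maxCoef_pos (θ := θ) (β := β) (η := η) (hρ.pos_s17 z) (by positivity : 0 < c * s)
        rw [ENNReal.ofReal_mul (by positivity), ENNReal.ofReal_mul (by positivity)]
        ring
    _ ≤ _ := by gcongr; exact le_eMaxB (by positivity) hx

end MaximalOperator

/-- A dyadic discretisation of the fractional integral of order `β` of `h`, at scales `≤ r`. -/
def dyadicFracSum (r β : ℝ) (h : Euc n → ℝ≥0∞) (y : Euc n) : ℝ≥0∞ :=
  ∑' k : ℕ, ENNReal.ofReal ((r / 2 ^ k) ^ (β - n)) * ∫⁻ w in cube y (2 * (r / 2 ^ k)), h w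

section DyadicFracSum

variable {r β : ℝ} {h : Euc n → ℝ≥0∞}

lemma ofReal_maxCoef_mul_lintegral_le_dyadicFracSum {ρ : Euc n → ℝ} {θ η : ℝ} {y z : Euc n}
    {s : ℝ} (hn : 0 < n) (hρ : 0 < ρ z) (hθ : 0 ≤ θ) (hβn : β ≤ n) (hη : 0 ≤ η) (hs : 0 < s)
    (hsr : s ≤ r) (hy : y ∈ cube z s) :
    ENNReal.ofReal (maxCoef ρ θ β η z s) * ∫⁻ w in cube z s, h w ≤
      ENNReal.ofReal (2 ^ ((n : ℝ) - β)) * dyadicFracSum r β h y := by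
  obtain ⟨k, hk, hk'⟩ := exists_nat_pow_near ((one_le_div hs).2 hsr) one_lt_two
  have hr : 0 < r := hs.trans_le hsr
  set t := r / 2 ^ k
  have hst : s ≤ t := by rwa [le_div_iff₀ (by positivity), mul_comm, ← le_div_iff₀ hs]
  have hts : t / 2 < s := by
    rwa [div_div, ← pow_succ, div_lt_iff₀ (by positivity), mul_comm, ← div_lt_iff₀ hs]
  have hcoef : maxCoef ρ θ β η z s ≤ 2 ^ ((n : ℝ) - β) * t ^ (β - n) :=
    calc maxCoef ρ θ β η z s ≤ s ^ (β - n) := maxCoef_le_rpow hn hρ hθ hβn hη hs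
      _ ≤ (t / 2) ^ (β - n) := Real.rpow_le_rpow_of_nonpos (by positivity) hts.le (by linarith)
      _ = 2 ^ ((n : ℝ) - β) * t ^ (β - n) := by
        rw [Real.div_rpow (by positivity) zero_le_two, show (n : ℝ) - β = -(β - n) by ring,
          Real.rpow_neg zero_le_two, div_eq_inv_mul]
  have hsub : cube z s ⊆ cube y (2 * t) :=
    (cube_subset_cube_add (mem_cube_comm.1 hy)).trans (cube_mono (by linarith))
  calc ENNReal.ofReal (maxCoef ρ θ β η z s) * ∫⁻ w in cube z s, h w
      ≤ ENNReal.ofReal (2 ^ ((n : ℝ) - β) * t ^ (β - n)) * ∫⁻ w in cube y (2 * t), h w := by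
        gcongr ?_ * ?_
        · exact ENNReal.ofReal_le_ofReal hcoef
        · exact lintegral_mono_set hsub
    _ = ENNReal.ofReal (2 ^ ((n : ℝ) - β)) *
          (ENNReal.ofReal (t ^ (β - n)) * ∫⁻ w in cube y (2 * t), h w) := by
        rw [ENNReal.ofReal_mul (by positivity), mul_assoc]
    _ ≤ _ := by
        gcongr
        exact ENNReal.le_tsum (f := fun k : ℕ => ENNReal.ofReal ((r / 2 ^ k) ^ (β - n)) *
          ∫⁻ w in cube y (2 * (r / 2 ^ k)), h w) k

lemma lintegral_dyadicFracSum_le (hβ : 0 < β) (hr : 0 < r) (hh : Measurable h)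
    (A : Set (Euc n)) :
    ∫⁻ y in A, dyadicFracSum r β h y ≤
      ENNReal.ofReal (2 ^ n * (1 - 2 ^ (-β))⁻¹ * r ^ β) * ∫⁻ w, h w := by
  set q : ℝ := 2 ^ (-β)
  have hq0 : 0 ≤ q := by positivity
  have hq1 : q < 1 := Real.rpow_lt_one_of_one_lt_of_neg one_lt_two (by linarith)
  have hterm : ∀ k : ℕ, ∫⁻ y in A, ENNReal.ofReal ((r / 2 ^ k) ^ (β - n)) *
      ∫⁻ w in cube y (2 * (r / 2 ^ k)), h w ≤
        ENNReal.ofReal (2 ^ n * r ^ β * q ^ k) * ∫⁻ w, h w := fun k => by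
    set t := r / 2 ^ k
    have ht : 0 < t := by positivity
    have htβ : t ^ (β - n) * (2 * t) ^ n = 2 ^ n * r ^ β * q ^ k := by
      rw [mul_pow, Real.rpow_sub_natCast ht.ne', Real.div_rpow hr.le (by positivity),
        ← Real.rpow_natCast_mul zero_le_two, ← Real.rpow_mul_natCast zero_le_two,
        neg_mul, Real.rpow_neg zero_le_two, mul_comm β]
      field_simp
    rw [lintegral_const_mul _ (measurable_lintegral_cube hh _), lintegral_lintegral_cube hh]
    calc ENNReal.ofReal (t ^ (β - n)) * ∫⁻ w, h w * volume (cube w (2 * t) ∩ A)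
        ≤ ENNReal.ofReal (t ^ (β - n)) * ∫⁻ w, h w * ENNReal.ofReal ((2 * t) ^ n) := by
          gcongr with w
          exact (measure_mono inter_subset_left).trans_eq (volume_cube _ (by positivity))
      _ = ENNReal.ofReal (2 ^ n * r ^ β * q ^ k) * ∫⁻ w, h w := by
          rw [lintegral_mul_const' _ _ ENNReal.ofReal_ne_top, ← htβ,
            ENNReal.ofReal_mul (by positivity)]
          ring
  calc ∫⁻ y in A, dyadicFracSum r β h y
      = ∑' k : ℕ, ∫⁻ y in A, ENNReal.ofReal ((r / 2 ^ k) ^ (β - n)) *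
          ∫⁻ w in cube y (2 * (r / 2 ^ k)), h w :=
        lintegral_tsum fun k => ((measurable_lintegral_cube hh _).const_mul _).aemeasurable
    _ ≤ ∑' k : ℕ, ENNReal.ofReal (2 ^ n * r ^ β * q ^ k) * ∫⁻ w, h w :=
        ENNReal.tsum_le_tsum hterm
    _ = ENNReal.ofReal (∑' k : ℕ, 2 ^ n * r ^ β * q ^ k) * ∫⁻ w, h w := by
        rw [ENNReal.tsum_mul_right, ENNReal.ofReal_tsum_of_nonneg (fun k => by positivity)
          ((summable_geometric_of_lt_one hq0 hq1).mul_left _)]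
    _ = _ := by
        rw [tsum_mul_left, tsum_geometric_of_lt_one hq0 hq1]
        ring_nf

end DyadicFracSum

section MainEstimate

variable {ρ : Euc n → ℝ} {C₀ l₀ θ β η : ℝ} {g : Euc n → ℝ≥0∞} {x₀ x : Euc n} {r : ℝ}

lemma eMaxB_le_add_dyadicFracSum (hn : 0 < n) (hρ : IsCriticalRadius ρ C₀ l₀) (hθ : 0 ≤ θ)
    (hβ0 : 0 ≤ β) (hβn : β ≤ n) (hη : 0 ≤ η) (hg : Measurable g) {y : Euc n}
    (hx : x ∈ cube x₀ r) (hy : y ∈ cube x₀ r) :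
    eMaxB ρ θ β η g y ≤
      ENNReal.ofReal (3 ^ (θ * (η + 1) + n) * 2 ^ (θ * (η + 1))) *
          eMaxB ρ θ β η (eMaxB ρ θ 0 η g) x +
        ENNReal.ofReal (2 ^ ((n : ℝ) - β)) *
          dyadicFracSum r β ((cube x₀ (3 * r)).indicator g) y := by
  refine eMaxB_le fun z s hs hyz => ?_
  rcases le_total r s with hrs | hsr
  · have hx' : x ∈ cube z (3 * s) :=
      (cube_subset_cube_add hyz).trans (cube_mono (by linarith))
        (cube_subset_cube_add (mem_cube_comm.1 hy) hx)
    exact le_add_right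
      (ofReal_maxCoef_mul_lintegral_le_eMaxB_eMaxB hn hρ hθ hβ0 hβn hη hg (by norm_num) hs hx')
  · have hsub : cube z s ⊆ cube x₀ (3 * r) :=
      (cube_subset_cube_add (cube_subset_cube_add hy (mem_cube_comm.1 hyz))).trans
        (cube_mono (by linarith))
    rw [setLIntegral_congr_fun (measurableSet_cube z s)
      fun w hw => (indicator_of_mem (hsub hw) g).symm]
    exact le_add_left (ofReal_maxCoef_mul_lintegral_le_dyadicFracSum hn (hρ.pos_s17 z) hθ hβn hη hs
      hsr hyz)

lemma ofReal_maxCoef_mul_lintegral_dyadicFracSum_le (hn : 0 < n)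
    (hρ : IsCriticalRadius ρ C₀ l₀) (hθ : 0 ≤ θ) (hβ : 0 < β) (hβn : β ≤ n) (hη : 0 ≤ η)
    (hg : Measurable g) (hr : 0 < r) (hx : x ∈ cube x₀ r) :
    ENNReal.ofReal (maxCoef ρ θ 0 (η + 1) x₀ r) *
        ∫⁻ y in cube x₀ r, dyadicFracSum r β ((cube x₀ (3 * r)).indicator g) y ≤
      ENNReal.ofReal (2 ^ n * (1 - 2 ^ (-β))⁻¹ * 3 ^ (θ * (η + 1) + n) *
          (2 ^ (θ * (η + 1) + n) * 2 ^ (θ * (η + 1)))) *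
        eMaxB ρ θ β η (eMaxB ρ θ 0 η g) x := by
  have hq : (0 : ℝ) < 1 - 2 ^ (-β) := sub_pos.2 (Real.rpow_lt_one_of_one_lt_of_neg one_lt_two
    (by linarith))
  have hcoef : maxCoef ρ θ 0 (η + 1) x₀ r * r ^ β ≤
      3 ^ (θ * (η + 1) + n) * maxCoef ρ θ β η x₀ (3 * r) :=
    (maxCoef_zero_add_one_mul_rpow_le hn (hρ.pos_s17 x₀) hθ hβ.le hr).trans
      (maxCoef_le_mul_maxCoef_mul hn (hρ.pos_s17 x₀) hθ hβ.le hβn hη hr (by norm_num))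
  have hx' : x ∈ cube x₀ (2 * (3 * r)) := cube_mono (by linarith) hx
  have ha0 := maxCoef_pos (θ := θ) (β := 0) (η := η + 1) (hρ.pos_s17 x₀) hr
  have hsum := lintegral_dyadicFracSum_le hβ hr (hg.indicator (measurableSet_cube x₀ (3 * r)))
    (cube x₀ r)
  rw [lintegral_indicator (measurableSet_cube _ _)] at hsum
  calc ENNReal.ofReal (maxCoef ρ θ 0 (η + 1) x₀ r) *
        ∫⁻ y in cube x₀ r, dyadicFracSum r β ((cube x₀ (3 * r)).indicator g) y
      ≤ ENNReal.ofReal (maxCoef ρ θ 0 (η + 1) x₀ r) *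
          (ENNReal.ofReal (2 ^ n * (1 - 2 ^ (-β))⁻¹ * r ^ β) *
            ∫⁻ w in cube x₀ (3 * r), g w) := by gcongr
    _ = ENNReal.ofReal (2 ^ n * (1 - 2 ^ (-β))⁻¹) *
          (ENNReal.ofReal (maxCoef ρ θ 0 (η + 1) x₀ r * r ^ β) *
            ∫⁻ w in cube x₀ (3 * r), g w) := by
        rw [ENNReal.ofReal_mul (by positivity), ENNReal.ofReal_mul (by positivity),
          ENNReal.ofReal_mul (by positivity)]
        ring
    _ ≤ ENNReal.ofReal (2 ^ n * (1 - 2 ^ (-β))⁻¹) *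
          (ENNReal.ofReal (3 ^ (θ * (η + 1) + n) * maxCoef ρ θ β η x₀ (3 * r)) *
            ∫⁻ w in cube x₀ (3 * r), g w) := by
        gcongr ENNReal.ofReal _ * (ENNReal.ofReal ?_ * _)
    _ = ENNReal.ofReal (2 ^ n * (1 - 2 ^ (-β))⁻¹) * ENNReal.ofReal (3 ^ (θ * (η + 1) + n)) *
          (ENNReal.ofReal (maxCoef ρ θ β η x₀ (3 * r)) * ∫⁻ w in cube x₀ (3 * r), g w) := by
        rw [ENNReal.ofReal_mul (p := 3 ^ (θ * (η + 1) + n)) (by positivity)]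
        ring
    _ ≤ ENNReal.ofReal (2 ^ n * (1 - 2 ^ (-β))⁻¹) * ENNReal.ofReal (3 ^ (θ * (η + 1) + n)) *
          (ENNReal.ofReal (2 ^ (θ * (η + 1) + n) * 2 ^ (θ * (η + 1))) *
            eMaxB ρ θ β η (eMaxB ρ θ 0 η g) x) := by
        gcongr ENNReal.ofReal _ * ENNReal.ofReal _ * ?_
        exact ofReal_maxCoef_mul_lintegral_le_eMaxB_eMaxB hn hρ hθ hβ.le hβn hη hg one_lt_two
          (by positivity) hx'
    _ = _ := by
        rw [← mul_assoc, ← ENNReal.ofReal_mul (by positivity), ← ENNReal.ofReal_mul (by positivity)]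

lemma exists_eMaxB_eMaxB_le_of_pos (hn : 0 < n) (hρ : IsCriticalRadius ρ C₀ l₀) (hθ : 0 ≤ θ)
    (hβ : 0 < β) (hβn : β ≤ n) (hη : 0 ≤ η) (hg : Measurable g) :
    ∃ C : ℝ, 0 < C ∧ ∀ x : Euc n,
      eMaxB ρ θ 0 (η + 1) (eMaxB ρ θ β η g) x ≤
        ENNReal.ofReal C * eMaxB ρ θ β η (eMaxB ρ θ 0 η g) x := by
  set K₁ : ℝ := 3 ^ (θ * (η + 1) + n) * 2 ^ (θ * (η + 1))
  set K₂ : ℝ := 2 ^ n * (1 - 2 ^ (-β))⁻¹ * 3 ^ (θ * (η + 1) + n) *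
    (2 ^ (θ * (η + 1) + n) * 2 ^ (θ * (η + 1)))
  have hq : (0 : ℝ) < 1 - 2 ^ (-β) :=
    sub_pos.2 (Real.rpow_lt_one_of_one_lt_of_neg one_lt_two (by linarith))
  refine ⟨K₁ + 2 ^ ((n : ℝ) - β) * K₂, by positivity, fun x => eMaxB_le fun x₀ r hr hx => ?_⟩
  set T := eMaxB ρ θ β η (eMaxB ρ θ 0 η g) x
  set a := maxCoef ρ θ 0 (η + 1) x₀ r
  have ha0 : 0 < a := maxCoef_pos (hρ.pos_s17 x₀) hr
  have ha : a * r ^ n ≤ 1 :=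
    calc a * r ^ n ≤ r ^ ((0 : ℝ) - n) * r ^ n := by
          gcongr
          exact maxCoef_le_rpow hn (hρ.pos_s17 x₀) hθ (Nat.cast_nonneg n) (by linarith) hr
      _ = 1 := by
          rw [zero_sub, Real.rpow_neg hr.le, Real.rpow_natCast, inv_mul_cancel₀ (by positivity)]
  calc ENNReal.ofReal a * ∫⁻ y in cube x₀ r, eMaxB ρ θ β η g y
      ≤ ENNReal.ofReal a * ∫⁻ y in cube x₀ r, (ENNReal.ofReal K₁ * T +
          ENNReal.ofReal (2 ^ ((n : ℝ) - β)) *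
            dyadicFracSum r β ((cube x₀ (3 * r)).indicator g) y) := by
        gcongr ENNReal.ofReal a * ?_
        exact setLIntegral_mono' (measurableSet_cube _ _) fun y hy =>
          eMaxB_le_add_dyadicFracSum hn hρ hθ hβ.le hβn hη hg hx hy
    _ = ENNReal.ofReal (a * r ^ n) * (ENNReal.ofReal K₁ * T) +
          ENNReal.ofReal (2 ^ ((n : ℝ) - β)) * (ENNReal.ofReal a *
            ∫⁻ y in cube x₀ r, dyadicFracSum r β ((cube x₀ (3 * r)).indicator g) y) := by
        rw [lintegral_add_left measurable_const, setLIntegral_const, lintegral_const_mul' _ _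
          ENNReal.ofReal_ne_top, volume_cube _ hr.le, ENNReal.ofReal_mul ha0.le]
        ring
    _ ≤ 1 * (ENNReal.ofReal K₁ * T) +
          ENNReal.ofReal (2 ^ ((n : ℝ) - β)) * (ENNReal.ofReal K₂ * T) := by
        gcongr ?_ * _ + _ * ?_
        · exact ENNReal.ofReal_le_one.2 ha
        · exact ofReal_maxCoef_mul_lintegral_dyadicFracSum_le hn hρ hθ hβ hβn hη hg hr hx
    _ = ENNReal.ofReal (K₁ + 2 ^ ((n : ℝ) - β) * K₂) * T := by
        rw [ENNReal.ofReal_add (by positivity) (by positivity),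
          ENNReal.ofReal_mul (p := 2 ^ ((n : ℝ) - β)) (by positivity)]
        ring

end MainEstimate

end Schrodinger

open Schrodinger

theorem stmt17_general (n : ℕ) (hn : 0 < n) (ρ : Euc n → ℝ) (C₀ l₀ : ℝ)
    (hρ : IsCriticalRadius ρ C₀ l₀) (θ : ℝ) (hθ : 0 ≤ θ) (β η : ℝ)
    (hβ0 : 0 ≤ β) (hβn : β < n) (hη : 0 < η) (f : Euc n → ℝ) (hf : Measurable f) :
    ∃ C : ℝ, 0 < C ∧ ∀ x : Euc n,
      eMaxB ρ θ 0 (η + 1) (fun y => eMaxB ρ θ β η (ofl f) y) x ≤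
        ENNReal.ofReal C *
          eMaxB ρ θ β η (fun y => eMaxB ρ θ 0 η (ofl f) y) x := by
  obtain rfl | hβ := hβ0.eq_or_lt
  · exact ⟨1, one_pos, fun x => by
      simpa using eMaxB_le_eMaxB_of_le_eta hρ.pos_s17 hθ (le_add_of_nonneg_right zero_le_one)⟩
  · exact exists_eMaxB_eMaxB_le_of_pos hn hρ hθ hβ hβn.le hη.le
      (ENNReal.measurable_ofReal.comp hf.abs)

/-- Lemma 4.2. -/
theorem stmt17 (n : ℕ) (hn : 0 < n) (ρ : Euc n → ℝ) (C₀ l₀ : ℝ)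
    (hρ : IsCriticalRadius ρ C₀ l₀) (θ : ℝ) (hθ : 0 ≤ θ) (β η : ℝ)
    (hβ0 : 0 ≤ β) (hβn : β < n) (hη : 0 < η) (f : Euc n → ℝ) (hf : Measurable f)
    (hloc1 : ∀ (x₀ : Euc n) (r : ℝ), 0 < r →
      ∫⁻ y in cube x₀ r, eMaxB ρ θ 0 η (ofl f) y ≠ ⊤)
    (hloc2 : ∀ (x₀ : Euc n) (r : ℝ), 0 < r →
      ∫⁻ y in cube x₀ r, eMaxB ρ θ β η (ofl f) y ≠ ⊤) :
    ∃ C : ℝ, 0 < C ∧ ∀ x : Euc n,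
      eMaxB ρ θ 0 (η + 1) (fun y => eMaxB ρ θ β η (ofl f) y) x ≤
        ENNReal.ofReal C *
          eMaxB ρ θ β η (fun y => eMaxB ρ θ 0 η (ofl f) y) x :=
  stmt17_general n hn ρ C₀ l₀ hρ θ hθ β η hβ0 hβn hη f hf
end
end
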